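/- arXiv:2003.07749 — 3 statements merged into one kernel-verified Lean document; each statement's English description precedes it below -/
import Mathlib

section
/- Let $\Omega \subset \mathbb{R}^{n+1}$ be open with nonempty boundary, let $\delta(X) = \mathrm{dist}(X, \partial\Omega)$, and let $\beta$ be a regularized distance with $m_1 \delta \le \beta \le m_2 \delta$ and $|\nabla \beta| \le C$. Let $\zeta \ge 0$ be smooth, supported in $B(0, 1/(2m_2))$, with $\int \zeta = 1$, and set $\Lambda(X,Y) = \beta(X)^{-n-1} \zeta((X-Y)/\beta(X))$. If $G_0 \in BV_{loc}(\Omega)$ and $\mu = |\nabla G_0(Y)|\,dY$ satisfies the weak bound $\delta(X)^{-n} \iint_{B(X, \delta(X)/2)} |\nabla G_0| \, dY \le C_\mu$ for all $X \in \Omega$, then the mollification $G(X) = \iint \Lambda(X,Y) G_0(Y)\,dY$ satisfies $|\nabla G(X)| \lesssim C_\mu / \delta(X)$ for every $X \in \Omega$. -/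
set_option maxHeartbeats 1000000

open MeasureTheory Metric Set ENNReal Topology

/-- Pointwise gradient bound for the mollification of a `BV_loc`
function whose variation measure satisfies the weak bound
`μ(B(X,δ(X)/2)) ≤ Cμ δ(X)^n`. -/
theorem statement2 {n : ℕ}
    (Ω : Set (EuclideanSpace ℝ (Fin (n+1)))) (hΩ : IsOpen Ω)
    (hbd : (frontier Ω).Nonempty)
    -- the distance to the boundary
    (δ : EuclideanSpace ℝ (Fin (n+1)) → ℝ)
    (hδ : ∀ X, δ X = Metric.infDist X (frontier Ω))
    -- Stein's regularized distance
    (β : EuclideanSpace ℝ (Fin (n+1)) → ℝ) (m₁ m₂ Cβ : ℝ)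
    (hm₁ : 0 < m₁) (hm : m₁ ≤ m₂)
    (hβsmooth : ContDiffOn ℝ (⊤ : ℕ∞) β Ω)
    (hβlow : ∀ X ∈ Ω, m₁ * δ X ≤ β X) (hβup : ∀ X ∈ Ω, β X ≤ m₂ * δ X)
    (hβgrad : ∀ X ∈ Ω, ‖fderivWithin ℝ β Ω X‖ ≤ Cβ)
    -- the mollifier
    (ζ : EuclideanSpace ℝ (Fin (n+1)) → ℝ)
    (hζsmooth : ContDiff ℝ (⊤ : ℕ∞) ζ) (hζ0 : ∀ x, 0 ≤ ζ x)
    (hζsupp : Function.support ζ ⊆ ball 0 (1 / (2 * m₂)))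
    (hζint : (∫ x, ζ x) = 1)
    -- G₀ ∈ BV_loc(Ω), with variation measure μ (encoded through the BV Poincaré
    -- inequality on balls contained in Ω)
    (G₀ : EuclideanSpace ℝ (Fin (n+1)) → ℝ)
    (hG₀ : LocallyIntegrableOn G₀ Ω)
    (μ : Measure (EuclideanSpace ℝ (Fin (n+1))))
    (CP : ℝ)
    (hPoincare : ∀ X r, 0 < r → ball X r ⊆ Ω →
      (∫ Y in ball X r, |G₀ Y - ⨍ Z in ball X r, G₀ Z|) ≤ CP * r * (μ (ball X r)).toReal)
    -- the weak Carleson-type bound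
    (Cμ : ℝ) (hCμ : 0 ≤ Cμ)
    (hweak : ∀ X ∈ Ω, (μ (ball X (δ X / 2))).toReal ≤ Cμ * δ X ^ n)
    -- the mollification G of G₀
    (G : EuclideanSpace ℝ (Fin (n+1)) → ℝ)
    (hG : ∀ X ∈ Ω, G X =
      ∫ Y, (β X) ^ (-(n : ℝ) - 1) * ζ ((β X)⁻¹ • (X - Y)) * G₀ Y) :
    ∃ C : ℝ, 0 < C ∧ ∀ X ∈ Ω, DifferentiableAt ℝ G X ∧
      ‖fderiv ℝ G X‖ ≤ C * Cμ / δ X := by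
  classical
  have hm₂ : 0 < m₂ := lt_of_lt_of_le hm₁ hm
  -- positivity of δ on Ω
  have hδpos : ∀ X ∈ Ω, 0 < δ X := by
    intro X hX
    rw [hδ]
    refine (isClosed_frontier.notMem_iff_infDist_pos hbd).mp ?_
    intro h
    exact (hΩ.frontier_eq ▸ h).2 hX
  -- Lipschitz property of δ
  have hδlip : ∀ x y : EuclideanSpace ℝ (Fin (n+1)), δ x ≤ δ y + dist x y := by
    intro x y; rw [hδ, hδ]; exact infDist_le_infDist_add_dist
  -- balls of radius δ are inside Ω
  have hball : ∀ X ∈ Ω, ball X (δ X) ⊆ Ω := by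
    intro X hX
    have hpc : IsPreconnected (ball X (δ X)) := (convex_ball X (δ X)).isPreconnected
    haveI := Subtype.preconnectedSpace hpc
    have hdisj : Disjoint (frontier Ω) (ball X (δ X)) := by
      rw [Set.disjoint_left]
      intro z hz hz'
      have h1 : δ X ≤ dist X z := hδ X ▸ infDist_le_dist_of_mem hz
      have h2 : dist X z < δ X := by rw [dist_comm]; exact mem_ball.mp hz'
      exact absurd h1 (not_le.mpr h2)
    have hclopen := isClopen_preimage_val hΩ hdisj
    have huniv := hclopen.eq_univ ⟨⟨X, mem_ball_self (hδpos X hX)⟩, hX⟩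
    intro y hy
    exact Set.eq_univ_iff_forall.mp huniv ⟨y, hy⟩
  have hβpos : ∀ x ∈ Ω, 0 < β x := fun x hx =>
    lt_of_lt_of_le (mul_pos hm₁ (hδpos x hx)) (hβlow x hx)
  have hβdiff : ∀ x ∈ Ω, HasFDerivAt β (fderiv ℝ β x) x := fun x hx =>
    (((hβsmooth.contDiffAt (hΩ.mem_nhds hx)).differentiableAt (by simp)).hasFDerivAt)
  obtain ⟨Cβ', hCβ'0, hβfd⟩ : ∃ C : ℝ, 0 ≤ C ∧ ∀ x ∈ Ω, ‖fderiv ℝ β x‖ ≤ C := by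
    refine ⟨max Cβ 0, le_max_right _ _, fun x hx => ?_⟩
    rw [← fderivWithin_of_isOpen hΩ hx]
    exact (hβgrad x hx).trans (le_max_left _ _)
  -- bounds for ζ and its derivative
  have hζts : tsupport ζ ⊆ closedBall 0 (1/(2*m₂)) :=
    (closure_mono hζsupp).trans closure_ball_subset_closedBall
  have hζcs : HasCompactSupport ζ :=
    (isCompact_closedBall (0 : EuclideanSpace ℝ (Fin (n+1))) (1/(2*m₂))).of_isClosed_subset
      (isClosed_tsupport ζ) hζts
  obtain ⟨M₁, hM₁⟩ := hζcs.exists_bound_of_continuous hζsmooth.continuous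
  obtain ⟨M₂, hM₂⟩ := (hζcs.fderiv ℝ).exists_bound_of_continuous
    (hζsmooth.continuous_fderiv (by simp))
  obtain ⟨Mζ, hMζ0, hζle, hζ'le⟩ : ∃ M : ℝ, 0 ≤ M ∧ (∀ x, |ζ x| ≤ M) ∧
      ∀ x, ‖fderiv ℝ ζ x‖ ≤ M := by
    refine ⟨max (max M₁ M₂) 0, le_max_right _ _, fun x => ?_, fun x => ?_⟩
    · exact (Real.norm_eq_abs (ζ x) ▸ hM₁ x).trans ((le_max_left _ _).trans (le_max_left _ _))
    · exact (hM₂ x).trans ((le_max_right _ _).trans (le_max_left _ _))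
  obtain ⟨Kζ, hKζ0, hKζeq⟩ : ∃ K : ℝ, 0 ≤ K ∧ K = Mζ * (1 + Cβ' / (2*m₁) + ((n:ℝ)+1) * Cβ') := by
    refine ⟨_, ?_, rfl⟩
    have h1 : 0 ≤ Cβ' / (2*m₁) := div_nonneg hCβ'0 (by linarith)
    have h2 : 0 ≤ ((n:ℝ)+1) * Cβ' := mul_nonneg (by positivity) hCβ'0
    exact mul_nonneg hMζ0 (by linarith)
  -- support property
  have hsupp0 : ∀ x ∈ Ω, ∀ Y, δ x / 2 < dist x Y →
      ζ ((β x)⁻¹ • (x - Y)) = 0 ∧ fderiv ℝ ζ ((β x)⁻¹ • (x - Y)) = 0 := by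
    intro x hx Y hY
    have hb := hβpos x hx
    have hu : (β x)⁻¹ • (x - Y) ∉ tsupport ζ := by
      intro hmem
      have h1 : ‖(β x)⁻¹ • (x - Y)‖ ≤ 1/(2*m₂) := by
        have := hζts hmem
        simpa [mem_closedBall, dist_zero_right] using this
      have h2 : ‖x - Y‖ = β x * ‖(β x)⁻¹ • (x - Y)‖ := by
        rw [norm_smul, norm_inv, Real.norm_eq_abs, abs_of_pos hb]
        field_simp
      have h3 : ‖x - Y‖ ≤ β x * (1/(2*m₂)) := by
        rw [h2]; exact mul_le_mul_of_nonneg_left h1 hb.le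
      have h4 : β x * (1/(2*m₂)) ≤ δ x / 2 := by
        rw [mul_one_div, div_le_div_iff₀ (by linarith) two_pos]
        nlinarith [hβup x hx]
      have h5 : dist x Y = ‖x - Y‖ := dist_eq_norm x Y
      linarith
    refine ⟨image_eq_zero_of_notMem_tsupport hu, ?_⟩
    by_contra h
    exact hu (support_fderiv_subset ℝ (Function.mem_support.mpr h))
  -- the derivative of the mollification kernel in the `x` variable
  have hderiv : ∀ (Y : EuclideanSpace ℝ (Fin (n+1))), ∀ x ∈ Ω,
      HasFDerivAt (fun x => (β x ^ (n+1))⁻¹ * ζ ((β x)⁻¹ • (x - Y)))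
        ((β x ^ (n+1))⁻¹ • ((β x)⁻¹ • fderiv ℝ ζ ((β x)⁻¹ • (x - Y))
            + (-(β x ^ 2)⁻¹ * fderiv ℝ ζ ((β x)⁻¹ • (x - Y)) (x - Y)) • fderiv ℝ β x)
          + ζ ((β x)⁻¹ • (x - Y)) •
            ((-(((n+1 : ℕ) : ℝ) * β x ^ (n + 1 - 1)) / (β x ^ (n+1)) ^ 2) • fderiv ℝ β x)) x := by
    intro Y x hx
    have hb := hβpos x hx
    have hbne : β x ≠ 0 := ne_of_gt hb
    have hβd := hβdiff x hx
    have h1 : HasFDerivAt (fun x => (β x ^ (n+1))⁻¹)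
        ((-(((n+1 : ℕ) : ℝ) * β x ^ (n + 1 - 1)) / (β x ^ (n+1)) ^ 2) • fderiv ℝ β x) x :=
      HasDerivAt.comp_hasFDerivAt (f := β) x
        ((hasDerivAt_pow (n+1) (β x)).inv (pow_ne_zero _ hbne)) hβd
    have h2 : HasFDerivAt (fun x => (β x)⁻¹) ((-(β x ^ 2)⁻¹) • fderiv ℝ β x) x :=
      HasDerivAt.comp_hasFDerivAt x (hasDerivAt_inv hbne) hβd
    have h4 : HasFDerivAt (fun x' => (β x')⁻¹ • (x' - Y))
        ((β x)⁻¹ • ContinuousLinearMap.id ℝ _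
          + ((-(β x ^ 2)⁻¹) • fderiv ℝ β x).smulRight (x - Y)) x :=
      h2.smul ((hasFDerivAt_id x).sub_const Y)
    have h6 : HasFDerivAt (fun x' => ζ ((β x')⁻¹ • (x' - Y)))
        ((fderiv ℝ ζ ((β x)⁻¹ • (x - Y))).comp
          ((β x)⁻¹ • ContinuousLinearMap.id ℝ _
            + ((-(β x ^ 2)⁻¹) • fderiv ℝ β x).smulRight (x - Y))) x :=
      ((hζsmooth.differentiable (by simp) _).hasFDerivAt).comp x h4
    have h7 := h1.mul h6
    have heq : ((β x ^ (n+1))⁻¹ • ((β x)⁻¹ • fderiv ℝ ζ ((β x)⁻¹ • (x - Y))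
            + (-(β x ^ 2)⁻¹ * fderiv ℝ ζ ((β x)⁻¹ • (x - Y)) (x - Y)) • fderiv ℝ β x)
          + ζ ((β x)⁻¹ • (x - Y)) •
            ((-(((n+1 : ℕ) : ℝ) * β x ^ (n + 1 - 1)) / (β x ^ (n+1)) ^ 2) • fderiv ℝ β x))
        = ((β x ^ (n+1))⁻¹ • ((fderiv ℝ ζ ((β x)⁻¹ • (x - Y))).comp
            ((β x)⁻¹ • ContinuousLinearMap.id ℝ _
              + ((-(β x ^ 2)⁻¹) • fderiv ℝ β x).smulRight (x - Y)))
          + ζ ((β x)⁻¹ • (x - Y)) •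
            ((-(((n+1 : ℕ) : ℝ) * β x ^ (n + 1 - 1)) / (β x ^ (n+1)) ^ 2) • fderiv ℝ β x)) := by
      ext w
      simp only [ContinuousLinearMap.add_apply, ContinuousLinearMap.coe_smul', Pi.smul_apply,
        ContinuousLinearMap.coe_comp', Function.comp_apply, ContinuousLinearMap.smulRight_apply,
        ContinuousLinearMap.coe_id', id_eq, smul_eq_mul, map_add, _root_.map_smul, map_neg]
      ring
    rw [heq]
    exact h7
  -- norm bound for the kernel derivative
  have hbound : ∀ x ∈ Ω, ∀ Y,
      ‖((β x ^ (n+1))⁻¹ • ((β x)⁻¹ • fderiv ℝ ζ ((β x)⁻¹ • (x - Y))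
            + (-(β x ^ 2)⁻¹ * fderiv ℝ ζ ((β x)⁻¹ • (x - Y)) (x - Y)) • fderiv ℝ β x)
          + ζ ((β x)⁻¹ • (x - Y)) •
            ((-(((n+1 : ℕ) : ℝ) * β x ^ (n + 1 - 1)) / (β x ^ (n+1)) ^ 2) • fderiv ℝ β x))‖
        ≤ Kζ * (β x ^ (n+2))⁻¹ := by
    intro x hx Y
    have hb := hβpos x hx
    have hbne : β x ≠ 0 := ne_of_gt hb
    rcases le_or_gt (dist x Y) (δ x / 2) with hcase | hcase
    · have hxy : ‖x - Y‖ ≤ β x / (2*m₁) := by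
        have h1 : ‖x - Y‖ ≤ δ x / 2 := by rw [← dist_eq_norm]; exact hcase
        have h2 : δ x ≤ β x / m₁ := by
          rw [le_div_iff₀ hm₁]; nlinarith [hβlow x hx]
        have h3 : β x / (2*m₁) = (β x / m₁) / 2 := by
          rw [div_div]; ring_nf
        linarith
      have hby : 0 ≤ β x / (2*m₁) := div_nonneg hb.le (by linarith)
      have hA : ‖fderiv ℝ ζ ((β x)⁻¹ • (x - Y))‖ ≤ Mζ := hζ'le _
      have hB : ‖fderiv ℝ β x‖ ≤ Cβ' := hβfd x hx
      have hApp : |fderiv ℝ ζ ((β x)⁻¹ • (x - Y)) (x - Y)| ≤ Mζ * (β x/(2*m₁)) := by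
        calc |fderiv ℝ ζ ((β x)⁻¹ • (x - Y)) (x - Y)|
            ≤ ‖fderiv ℝ ζ ((β x)⁻¹ • (x - Y))‖ * ‖x - Y‖ :=
              (fderiv ℝ ζ ((β x)⁻¹ • (x - Y))).le_opNorm _
          _ ≤ Mζ * (β x/(2*m₁)) := mul_le_mul hA hxy (norm_nonneg _) hMζ0
      have e1 : ‖(β x)⁻¹ • fderiv ℝ ζ ((β x)⁻¹ • (x - Y))
            + (-(β x ^ 2)⁻¹ * fderiv ℝ ζ ((β x)⁻¹ • (x - Y)) (x - Y)) • fderiv ℝ β x‖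
          ≤ (β x)⁻¹ * Mζ + (β x ^ 2)⁻¹ * (Mζ * (β x/(2*m₁))) * Cβ' := by
        refine (norm_add_le _ _).trans (add_le_add ?_ ?_)
        · rw [norm_smul, Real.norm_eq_abs, abs_of_pos (inv_pos.mpr hb)]
          exact mul_le_mul_of_nonneg_left hA (inv_pos.mpr hb).le
        · rw [norm_smul, Real.norm_eq_abs, abs_mul, abs_neg, abs_inv,
            abs_of_pos (pow_pos hb 2)]
          refine mul_le_mul (mul_le_mul_of_nonneg_left hApp
            (inv_nonneg.mpr (pow_pos hb 2).le)) hB (norm_nonneg _) ?_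
          exact mul_nonneg (inv_nonneg.mpr (pow_pos hb 2).le) (mul_nonneg hMζ0 hby)
      have e2 : ‖ζ ((β x)⁻¹ • (x - Y)) •
            ((-(((n+1 : ℕ) : ℝ) * β x ^ (n + 1 - 1)) / (β x ^ (n+1)) ^ 2) • fderiv ℝ β x)‖
          ≤ Mζ * ((((n+1 : ℕ) : ℝ) * β x ^ (n + 1 - 1) / (β x ^ (n+1)) ^ 2) * Cβ') := by
        rw [norm_smul, norm_smul, Real.norm_eq_abs, Real.norm_eq_abs]
        have habs : |(-(((n+1 : ℕ) : ℝ) * β x ^ (n + 1 - 1)) / (β x ^ (n+1)) ^ 2)|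
            = ((n+1 : ℕ) : ℝ) * β x ^ (n + 1 - 1) / (β x ^ (n+1)) ^ 2 := by
          rw [abs_div, abs_neg, abs_of_nonneg (mul_nonneg (Nat.cast_nonneg _)
            (pow_nonneg hb.le _)), abs_of_nonneg (by positivity)]
        rw [habs]
        refine mul_le_mul (hζle _) (mul_le_mul_of_nonneg_left hB (by positivity))
          (mul_nonneg (by positivity) (norm_nonneg _)) hMζ0
      calc ‖((β x ^ (n+1))⁻¹ • ((β x)⁻¹ • fderiv ℝ ζ ((β x)⁻¹ • (x - Y))
            + (-(β x ^ 2)⁻¹ * fderiv ℝ ζ ((β x)⁻¹ • (x - Y)) (x - Y)) • fderiv ℝ β x)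
          + ζ ((β x)⁻¹ • (x - Y)) •
            ((-(((n+1 : ℕ) : ℝ) * β x ^ (n + 1 - 1)) / (β x ^ (n+1)) ^ 2) • fderiv ℝ β x))‖
          ≤ (β x ^ (n+1))⁻¹ * ((β x)⁻¹ * Mζ + (β x ^ 2)⁻¹ * (Mζ * (β x/(2*m₁))) * Cβ')
            + Mζ * ((((n+1 : ℕ) : ℝ) * β x ^ (n + 1 - 1) / (β x ^ (n+1)) ^ 2) * Cβ') := by
            refine (norm_add_le _ _).trans (add_le_add ?_ e2)
            rw [norm_smul, Real.norm_eq_abs, abs_of_pos (by positivity)]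
            exact mul_le_mul_of_nonneg_left e1 (by positivity)
        _ = Kζ * (β x ^ (n+2))⁻¹ := by
            rw [hKζeq, Nat.add_sub_cancel]
            field_simp
            push_cast
            ring
    · rw [(hsupp0 x hx Y hcase).1, (hsupp0 x hx Y hcase).2]
      simp only [ContinuousLinearMap.zero_apply, mul_zero, zero_smul, smul_zero, zero_add,
        add_zero, norm_zero]
      exact mul_nonneg hKζ0 (inv_nonneg.mpr (pow_nonneg hb.le _))
  -- total mass of the kernel
  have hΛint : ∀ x ∈ Ω, (∫ Y, (β x ^ (n+1))⁻¹ * ζ ((β x)⁻¹ • (x - Y))) = 1 := by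
    intro x hx
    have hb := hβpos x hx
    have hbne : β x ≠ 0 := hb.ne'
    have h2 : (∫ Y, ζ ((β x)⁻¹ • (x - Y))) = ∫ Y, ζ ((β x)⁻¹ • Y) :=
      integral_sub_left_eq_self (fun Y => ζ ((β x)⁻¹ • Y)) volume x
    have h3 : (∫ Y, ζ ((β x)⁻¹ • Y)) = β x ^ (n+1) := by
      rw [Measure.integral_comp_inv_smul volume ζ (β x), hζint, smul_eq_mul, mul_one,
        finrank_euclideanSpace_fin, abs_of_pos (pow_pos hb _)]
    rw [integral_const_mul, h2, h3, inv_mul_cancel₀ (pow_ne_zero _ hbne)]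
  -- measurability of G₀
  have hG₀meas : AEStronglyMeasurable G₀ (volume.restrict Ω) := hG₀.aestronglyMeasurable
  -- the constant
  refine ⟨max 1 (max CP 0 * Kζ / (2 * m₁ ^ (n+2))), lt_of_lt_of_le one_pos (le_max_left _ _), ?_⟩
  intro X₀ hX₀
  set d := δ X₀ with hd
  have hdpos : 0 < d := hδpos X₀ hX₀
  have hε : (0:ℝ) < d/4 := by linarith
  have hsubΩ : ball X₀ (d/4) ⊆ Ω := fun y hy =>
    hball X₀ hX₀ (ball_subset_ball (by linarith) hy)
  have hδlow : ∀ x ∈ ball X₀ (d/4), 3*d/4 ≤ δ x := by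
    intro x hx
    have h1 := hδlip X₀ x
    have h2 : dist X₀ x < d/4 := by rw [dist_comm]; exact mem_ball.mp hx
    linarith
  have hKsub : ∀ x ∈ ball X₀ (d/4), closedBall x (δ x / 2) ⊆ closedBall X₀ (7*d/8) := by
    intro x hx Y hY
    have h1 : dist x X₀ < d/4 := mem_ball.mp hx
    have h2 : dist Y x ≤ δ x / 2 := mem_closedBall.mp hY
    have h3 : δ x ≤ d + d/4 := by
      have := hδlip x X₀
      rw [dist_comm] at h1
      nlinarith [hδlip x X₀, dist_comm x X₀ ▸ h1]
    exact mem_closedBall.mpr (le_trans (dist_triangle Y x X₀) (by linarith))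
  have h78 : closedBall X₀ (7*d/8) ⊆ Ω := fun y hy =>
    hball X₀ hX₀ (mem_ball.mpr (lt_of_le_of_lt (mem_closedBall.mp hy) (by linarith)))
  have hβX₀low : m₁ * d ≤ β X₀ := hβlow X₀ hX₀
  have hmd : 0 < m₁ * d := mul_pos hm₁ hdpos
  -- the key differentiation lemma
  have key : ∀ g : EuclideanSpace ℝ (Fin (n+1)) → ℝ,
      AEStronglyMeasurable g (volume.restrict Ω) →
      IntegrableOn g (closedBall X₀ (7*d/8)) →
      HasFDerivAt (fun x => ∫ Y, (β x ^ (n+1))⁻¹ * ζ ((β x)⁻¹ • (x - Y)) * g Y)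
        (∫ Y, g Y • ((β X₀ ^ (n+1))⁻¹ • ((β X₀)⁻¹ • fderiv ℝ ζ ((β X₀)⁻¹ • (X₀ - Y))
            + (-(β X₀ ^ 2)⁻¹ * fderiv ℝ ζ ((β X₀)⁻¹ • (X₀ - Y)) (X₀ - Y)) • fderiv ℝ β X₀)
          + ζ ((β X₀)⁻¹ • (X₀ - Y)) •
            ((-(((n+1 : ℕ) : ℝ) * β X₀ ^ (n + 1 - 1)) / (β X₀ ^ (n+1)) ^ 2) • fderiv ℝ β X₀))) X₀
      ∧ Integrable (fun Y => g Y •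
          ((β X₀ ^ (n+1))⁻¹ • ((β X₀)⁻¹ • fderiv ℝ ζ ((β X₀)⁻¹ • (X₀ - Y))
            + (-(β X₀ ^ 2)⁻¹ * fderiv ℝ ζ ((β X₀)⁻¹ • (X₀ - Y)) (X₀ - Y)) • fderiv ℝ β X₀)
          + ζ ((β X₀)⁻¹ • (X₀ - Y)) •
            ((-(((n+1 : ℕ) : ℝ) * β X₀ ^ (n + 1 - 1)) / (β X₀ ^ (n+1)) ^ 2) • fderiv ℝ β X₀))) := by
    intro g hgm hgi
    have hq : (0:ℝ) < m₁ * (3*d/4) := by nlinarith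
    have hcb : (0:ℝ) ≤ Kζ * ((m₁ * (3*d/4)) ^ (n+2))⁻¹ :=
      mul_nonneg hKζ0 (inv_nonneg.mpr (pow_nonneg hq.le _))
    -- support vanishing outside the big ball
    have hzero : ∀ x ∈ ball X₀ (d/4), ∀ Y, Y ∉ closedBall X₀ (7*d/8) →
        ζ ((β x)⁻¹ • (x - Y)) = 0 ∧ fderiv ℝ ζ ((β x)⁻¹ • (x - Y)) = 0 := by
      intro x hx Y hY
      refine hsupp0 x (hsubΩ hx) Y ?_
      by_contra hcon
      push_neg at hcon
      exact hY (hKsub x hx (mem_closedBall.mpr (by rw [dist_comm]; exact hcon)))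
    -- measurability of the integrand
    have hmeas : ∀ x ∈ ball X₀ (d/4),
        AEStronglyMeasurable (fun Y => (β x ^ (n+1))⁻¹ * ζ ((β x)⁻¹ • (x - Y)) * g Y) volume := by
      intro x hx
      have hcont : Continuous (fun Y : EuclideanSpace ℝ (Fin (n+1)) =>
          (β x ^ (n+1))⁻¹ * ζ ((β x)⁻¹ • (x - Y))) :=
        continuous_const.mul (hζsmooth.continuous.comp
          (by fun_prop))
      have hss : Function.support (fun Y => (β x ^ (n+1))⁻¹ * ζ ((β x)⁻¹ • (x - Y)) * g Y)
          ⊆ closedBall X₀ (7*d/8) := by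
        refine Function.support_subset_iff'.mpr fun Y hY => ?_
        rw [(hzero x hx Y hY).1, mul_zero, zero_mul]
      rw [← Set.indicator_eq_self.mpr hss]
      exact (aestronglyMeasurable_indicator_iff measurableSet_closedBall).mpr
        ((hcont.aestronglyMeasurable.restrict).mul
          (hgm.mono_measure (Measure.restrict_mono h78 le_rfl)))
    -- pointwise bound
    have hptw : ∀ Y, ∀ x ∈ ball X₀ (d/4),
        ‖g Y • ((β x ^ (n+1))⁻¹ • ((β x)⁻¹ • fderiv ℝ ζ ((β x)⁻¹ • (x - Y))
            + (-(β x ^ 2)⁻¹ * fderiv ℝ ζ ((β x)⁻¹ • (x - Y)) (x - Y)) • fderiv ℝ β x)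
          + ζ ((β x)⁻¹ • (x - Y)) •
            ((-(((n+1 : ℕ) : ℝ) * β x ^ (n + 1 - 1)) / (β x ^ (n+1)) ^ 2) • fderiv ℝ β x))‖
        ≤ (closedBall X₀ (7*d/8)).indicator
            (fun Y => Kζ * ((m₁ * (3*d/4)) ^ (n+2))⁻¹ * ‖g Y‖) Y := by
      intro Y x hx
      rcases le_or_gt (dist x Y) (δ x / 2) with hc | hc
      · have hYmem : Y ∈ closedBall X₀ (7*d/8) :=
          hKsub x hx (mem_closedBall.mpr (by rw [dist_comm]; exact hc))
        rw [Set.indicator_of_mem hYmem, norm_smul]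
        have h1 := hbound x (hsubΩ hx) Y
        have h2 : Kζ * (β x ^ (n+2))⁻¹ ≤ Kζ * ((m₁ * (3*d/4)) ^ (n+2))⁻¹ := by
          refine mul_le_mul_of_nonneg_left ?_ hKζ0
          refine inv_anti₀ (pow_pos hq _) (pow_le_pow_left₀ hq.le ?_ _)
          calc m₁ * (3*d/4) ≤ m₁ * δ x := by nlinarith [hδlow x hx]
            _ ≤ β x := hβlow x (hsubΩ hx)
        calc ‖g Y‖ * ‖_‖ ≤ ‖g Y‖ * (Kζ * ((m₁ * (3*d/4)) ^ (n+2))⁻¹) :=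
              mul_le_mul_of_nonneg_left (h1.trans h2) (norm_nonneg _)
          _ = Kζ * ((m₁ * (3*d/4)) ^ (n+2))⁻¹ * ‖g Y‖ := mul_comm _ _
      · have h0 := hsupp0 x (hsubΩ hx) Y hc
        rw [h0.1, h0.2]
        simp only [ContinuousLinearMap.zero_apply, mul_zero, zero_smul, smul_zero, zero_add,
          add_zero, norm_zero]
        exact Set.indicator_nonneg (fun Y _ => mul_nonneg hcb (norm_nonneg _)) Y
    -- integrability of the bound
    have hbnd_int : Integrable ((closedBall X₀ (7*d/8)).indicator
        (fun Y => Kζ * ((m₁ * (3*d/4)) ^ (n+2))⁻¹ * ‖g Y‖)) :=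
      (integrable_indicator_iff measurableSet_closedBall).mpr (hgi.norm.const_mul _)
    -- integrability of the function itself at X₀
    have hX₀mem : X₀ ∈ ball X₀ (d/4) := mem_ball_self hε
    have hFint : Integrable (fun Y => (β X₀ ^ (n+1))⁻¹ * ζ ((β X₀)⁻¹ • (X₀ - Y)) * g Y) := by
      have hss : Function.support (fun Y => (β X₀ ^ (n+1))⁻¹ * ζ ((β X₀)⁻¹ • (X₀ - Y)) * g Y)
          ⊆ closedBall X₀ (7*d/8) := by
        refine Function.support_subset_iff'.mpr fun Y hY => ?_
        rw [(hzero X₀ hX₀mem Y hY).1, mul_zero, zero_mul]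
      rw [← integrableOn_iff_integrable_of_support_subset hss]
      refine Integrable.bdd_mul (c := (β X₀ ^ (n+1))⁻¹ * Mζ) hgi ?_ ?_
      · exact (continuous_const.mul (hζsmooth.continuous.comp
          (by fun_prop))).aestronglyMeasurable.restrict
      · refine Filter.Eventually.of_forall fun Y => ?_
        rw [Real.norm_eq_abs, abs_mul, abs_of_pos (inv_pos.mpr (pow_pos (hβpos X₀ hX₀) _))]
        exact mul_le_mul_of_nonneg_left (hζle _)
          (inv_pos.mpr (pow_pos (hβpos X₀ hX₀) _)).le
    -- measurability of the derivative at X₀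
    have hF'meas : AEStronglyMeasurable (fun Y => g Y •
        ((β X₀ ^ (n+1))⁻¹ • ((β X₀)⁻¹ • fderiv ℝ ζ ((β X₀)⁻¹ • (X₀ - Y))
            + (-(β X₀ ^ 2)⁻¹ * fderiv ℝ ζ ((β X₀)⁻¹ • (X₀ - Y)) (X₀ - Y)) • fderiv ℝ β X₀)
          + ζ ((β X₀)⁻¹ • (X₀ - Y)) •
            ((-(((n+1 : ℕ) : ℝ) * β X₀ ^ (n + 1 - 1)) / (β X₀ ^ (n+1)) ^ 2) • fderiv ℝ β X₀)))
        volume := by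
      have hu : Continuous fun Y : EuclideanSpace ℝ (Fin (n+1)) => (β X₀)⁻¹ • (X₀ - Y) :=
        by fun_prop
      have hA : Continuous fun Y => fderiv ℝ ζ ((β X₀)⁻¹ • (X₀ - Y)) :=
        (hζsmooth.continuous_fderiv (by simp)).comp hu
      have happ : Continuous fun Y => fderiv ℝ ζ ((β X₀)⁻¹ • (X₀ - Y)) (X₀ - Y) :=
        hA.clm_apply (continuous_const.sub continuous_id)
      have hcontF' : Continuous (fun Y =>
          ((β X₀ ^ (n+1))⁻¹ • ((β X₀)⁻¹ • fderiv ℝ ζ ((β X₀)⁻¹ • (X₀ - Y))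
            + (-(β X₀ ^ 2)⁻¹ * fderiv ℝ ζ ((β X₀)⁻¹ • (X₀ - Y)) (X₀ - Y)) • fderiv ℝ β X₀)
          + ζ ((β X₀)⁻¹ • (X₀ - Y)) •
            ((-(((n+1 : ℕ) : ℝ) * β X₀ ^ (n + 1 - 1)) / (β X₀ ^ (n+1)) ^ 2) • fderiv ℝ β X₀))) := by
        have hζc := hζsmooth.continuous
        fun_prop
      have hss : Function.support (fun Y => g Y •
          ((β X₀ ^ (n+1))⁻¹ • ((β X₀)⁻¹ • fderiv ℝ ζ ((β X₀)⁻¹ • (X₀ - Y))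
            + (-(β X₀ ^ 2)⁻¹ * fderiv ℝ ζ ((β X₀)⁻¹ • (X₀ - Y)) (X₀ - Y)) • fderiv ℝ β X₀)
          + ζ ((β X₀)⁻¹ • (X₀ - Y)) •
            ((-(((n+1 : ℕ) : ℝ) * β X₀ ^ (n + 1 - 1)) / (β X₀ ^ (n+1)) ^ 2) • fderiv ℝ β X₀)))
          ⊆ closedBall X₀ (7*d/8) := by
        refine Function.support_subset_iff'.mpr fun Y hY => ?_
        rw [(hzero X₀ hX₀mem Y hY).1, (hzero X₀ hX₀mem Y hY).2]
        simp only [ContinuousLinearMap.zero_apply, mul_zero, zero_smul, smul_zero, zero_add,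
          add_zero, smul_zero]
      rw [← Set.indicator_eq_self.mpr hss]
      exact (aestronglyMeasurable_indicator_iff measurableSet_closedBall).mpr
        ((hgm.mono_measure (Measure.restrict_mono h78 le_rfl)).smul
          hcontF'.aestronglyMeasurable.restrict)
    -- apply the dominated differentiation theorem
    have hmain := hasFDerivAt_integral_of_dominated_of_fderiv_le (ball_mem_nhds X₀ hε)
      (Filter.eventually_of_mem (ball_mem_nhds X₀ hε) hmeas) hFint hF'meas
      (Filter.Eventually.of_forall fun Y => fun x hx => hptw Y x hx) hbnd_int
      (Filter.Eventually.of_forall fun Y => fun x hx =>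
        (hderiv Y x (hsubΩ hx)).mul_const (g Y))
    refine ⟨hmain, ?_⟩
    exact hbnd_int.mono' hF'meas
      (Filter.Eventually.of_forall fun Y => hptw Y X₀ hX₀mem)
  -- apply to G₀ and to the constant average
  have hG₀i : IntegrableOn G₀ (closedBall X₀ (7*d/8)) :=
    hG₀.integrableOn_compact_subset h78 (isCompact_closedBall _ _)
  obtain ⟨hdG, hiG⟩ := key G₀ hG₀meas hG₀i
  obtain ⟨hdC, hiC⟩ := key (fun _ => ⨍ Z in ball X₀ (d/2), G₀ Z)
    aestronglyMeasurable_const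
    (integrableOn_const measure_closedBall_lt_top.ne)
  -- the derivative of the constant mollification vanishes
  have hzero : (∫ Y, (⨍ Z in ball X₀ (d/2), G₀ Z) •
      ((β X₀ ^ (n+1))⁻¹ • ((β X₀)⁻¹ • fderiv ℝ ζ ((β X₀)⁻¹ • (X₀ - Y))
          + (-(β X₀ ^ 2)⁻¹ * fderiv ℝ ζ ((β X₀)⁻¹ • (X₀ - Y)) (X₀ - Y)) • fderiv ℝ β X₀)
        + ζ ((β X₀)⁻¹ • (X₀ - Y)) •
          ((-(((n+1 : ℕ) : ℝ) * β X₀ ^ (n + 1 - 1)) / (β X₀ ^ (n+1)) ^ 2) • fderiv ℝ β X₀))) = 0 := by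
    have hconst : (fun _ : EuclideanSpace ℝ (Fin (n+1)) => (⨍ Z in ball X₀ (d/2), G₀ Z))
        =ᶠ[𝓝 X₀] (fun x => ∫ Y, (β x ^ (n+1))⁻¹ * ζ ((β x)⁻¹ • (x - Y)) *
          (⨍ Z in ball X₀ (d/2), G₀ Z)) := by
      filter_upwards [hΩ.mem_nhds hX₀] with x hx
      rw [integral_mul_const, hΛint x hx, one_mul]
    have h0 : HasFDerivAt (fun _ : EuclideanSpace ℝ (Fin (n+1)) =>
        (⨍ Z in ball X₀ (d/2), G₀ Z)) _ X₀ := hdC.congr_of_eventuallyEq hconst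
    exact (h0.unique (hasFDerivAt_const _ X₀))
  -- G agrees with the mollification near X₀
  have hGeq : G =ᶠ[𝓝 X₀] (fun x => ∫ Y, (β x ^ (n+1))⁻¹ * ζ ((β x)⁻¹ • (x - Y)) * G₀ Y) := by
    filter_upwards [hΩ.mem_nhds hX₀] with x hx
    have hb := hβpos x hx
    have hrw : β x ^ (-(n:ℝ) - 1) = (β x ^ (n+1))⁻¹ := by
      rw [show -(n:ℝ) - 1 = -((n+1 : ℕ) : ℝ) by push_cast; ring,
        Real.rpow_neg hb.le, Real.rpow_natCast]
    rw [hG x hx]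
    simp only [hrw]
  have hGd : HasFDerivAt G (∫ Y, G₀ Y •
      ((β X₀ ^ (n+1))⁻¹ • ((β X₀)⁻¹ • fderiv ℝ ζ ((β X₀)⁻¹ • (X₀ - Y))
          + (-(β X₀ ^ 2)⁻¹ * fderiv ℝ ζ ((β X₀)⁻¹ • (X₀ - Y)) (X₀ - Y)) • fderiv ℝ β X₀)
        + ζ ((β X₀)⁻¹ • (X₀ - Y)) •
          ((-(((n+1 : ℕ) : ℝ) * β X₀ ^ (n + 1 - 1)) / (β X₀ ^ (n+1)) ^ 2) • fderiv ℝ β X₀))) X₀ :=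
    hdG.congr_of_eventuallyEq hGeq
  refine ⟨hGd.differentiableAt, ?_⟩
  rw [hGd.fderiv]
  -- subtract the constant
  have hfeq : (∫ Y, G₀ Y •
      ((β X₀ ^ (n+1))⁻¹ • ((β X₀)⁻¹ • fderiv ℝ ζ ((β X₀)⁻¹ • (X₀ - Y))
          + (-(β X₀ ^ 2)⁻¹ * fderiv ℝ ζ ((β X₀)⁻¹ • (X₀ - Y)) (X₀ - Y)) • fderiv ℝ β X₀)
        + ζ ((β X₀)⁻¹ • (X₀ - Y)) •
          ((-(((n+1 : ℕ) : ℝ) * β X₀ ^ (n + 1 - 1)) / (β X₀ ^ (n+1)) ^ 2) • fderiv ℝ β X₀)))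
      = ∫ Y, (G₀ Y - ⨍ Z in ball X₀ (d/2), G₀ Z) •
      ((β X₀ ^ (n+1))⁻¹ • ((β X₀)⁻¹ • fderiv ℝ ζ ((β X₀)⁻¹ • (X₀ - Y))
          + (-(β X₀ ^ 2)⁻¹ * fderiv ℝ ζ ((β X₀)⁻¹ • (X₀ - Y)) (X₀ - Y)) • fderiv ℝ β X₀)
        + ζ ((β X₀)⁻¹ • (X₀ - Y)) •
          ((-(((n+1 : ℕ) : ℝ) * β X₀ ^ (n + 1 - 1)) / (β X₀ ^ (n+1)) ^ 2) • fderiv ℝ β X₀)) := by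
    rw [show (fun Y => (G₀ Y - ⨍ Z in ball X₀ (d/2), G₀ Z) •
      ((β X₀ ^ (n+1))⁻¹ • ((β X₀)⁻¹ • fderiv ℝ ζ ((β X₀)⁻¹ • (X₀ - Y))
          + (-(β X₀ ^ 2)⁻¹ * fderiv ℝ ζ ((β X₀)⁻¹ • (X₀ - Y)) (X₀ - Y)) • fderiv ℝ β X₀)
        + ζ ((β X₀)⁻¹ • (X₀ - Y)) •
          ((-(((n+1 : ℕ) : ℝ) * β X₀ ^ (n + 1 - 1)) / (β X₀ ^ (n+1)) ^ 2) • fderiv ℝ β X₀)))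
      = fun Y => G₀ Y •
      ((β X₀ ^ (n+1))⁻¹ • ((β X₀)⁻¹ • fderiv ℝ ζ ((β X₀)⁻¹ • (X₀ - Y))
          + (-(β X₀ ^ 2)⁻¹ * fderiv ℝ ζ ((β X₀)⁻¹ • (X₀ - Y)) (X₀ - Y)) • fderiv ℝ β X₀)
        + ζ ((β X₀)⁻¹ • (X₀ - Y)) •
          ((-(((n+1 : ℕ) : ℝ) * β X₀ ^ (n + 1 - 1)) / (β X₀ ^ (n+1)) ^ 2) • fderiv ℝ β X₀))
      - (⨍ Z in ball X₀ (d/2), G₀ Z) •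
      ((β X₀ ^ (n+1))⁻¹ • ((β X₀)⁻¹ • fderiv ℝ ζ ((β X₀)⁻¹ • (X₀ - Y))
          + (-(β X₀ ^ 2)⁻¹ * fderiv ℝ ζ ((β X₀)⁻¹ • (X₀ - Y)) (X₀ - Y)) • fderiv ℝ β X₀)
        + ζ ((β X₀)⁻¹ • (X₀ - Y)) •
          ((-(((n+1 : ℕ) : ℝ) * β X₀ ^ (n + 1 - 1)) / (β X₀ ^ (n+1)) ^ 2) • fderiv ℝ β X₀))
      from funext fun Y => sub_smul _ _ _, integral_sub hiG hiC, hzero, sub_zero]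
  rw [hfeq]
  -- final estimate
  have hb₀ := hβpos X₀ hX₀
  have hKd0 : 0 ≤ Kζ * ((m₁ * d) ^ (n+2))⁻¹ :=
    mul_nonneg hKζ0 (inv_nonneg.mpr (pow_nonneg hmd.le _))
  have hballs : ball X₀ (d/2) ⊆ Ω := fun y hy =>
    hball X₀ hX₀ (ball_subset_ball (by linarith) hy)
  have hcbs : closedBall X₀ (d/2) ⊆ Ω := fun y hy =>
    hball X₀ hX₀ (mem_ball.mpr (lt_of_le_of_lt (mem_closedBall.mp hy) (by linarith)))
  have hG₀cb : IntegrableOn G₀ (closedBall X₀ (d/2)) :=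
    hG₀.integrableOn_compact_subset hcbs (isCompact_closedBall _ _)
  have hnorm_le : ∀ Y, ‖(G₀ Y - ⨍ Z in ball X₀ (d/2), G₀ Z) •
      ((β X₀ ^ (n+1))⁻¹ • ((β X₀)⁻¹ • fderiv ℝ ζ ((β X₀)⁻¹ • (X₀ - Y))
          + (-(β X₀ ^ 2)⁻¹ * fderiv ℝ ζ ((β X₀)⁻¹ • (X₀ - Y)) (X₀ - Y)) • fderiv ℝ β X₀)
        + ζ ((β X₀)⁻¹ • (X₀ - Y)) •
          ((-(((n+1 : ℕ) : ℝ) * β X₀ ^ (n + 1 - 1)) / (β X₀ ^ (n+1)) ^ 2) • fderiv ℝ β X₀))‖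
      ≤ (closedBall X₀ (d/2)).indicator
          (fun Y => |G₀ Y - ⨍ Z in ball X₀ (d/2), G₀ Z| * (Kζ * ((m₁ * d) ^ (n+2))⁻¹)) Y := by
    intro Y
    rcases le_or_gt (dist X₀ Y) (d / 2) with hc | hc
    · have hYmem : Y ∈ closedBall X₀ (d/2) := mem_closedBall.mpr (by rw [dist_comm]; exact hc)
      rw [Set.indicator_of_mem hYmem, norm_smul, Real.norm_eq_abs]
      refine mul_le_mul_of_nonneg_left ?_ (abs_nonneg _)
      refine (hbound X₀ hX₀ Y).trans ?_
      refine mul_le_mul_of_nonneg_left ?_ hKζ0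
      exact inv_anti₀ (pow_pos hmd _) (pow_le_pow_left₀ hmd.le hβX₀low _)
    · have h0 := hsupp0 X₀ hX₀ Y (by rw [← hd] at *; linarith)
      rw [h0.1, h0.2]
      simp only [ContinuousLinearMap.zero_apply, mul_zero, zero_smul, smul_zero, zero_add,
        add_zero, norm_zero]
      exact Set.indicator_nonneg
        (fun Y _ => mul_nonneg (abs_nonneg _) hKd0) Y
  have hind_int : Integrable ((closedBall X₀ (d/2)).indicator
      (fun Y => |G₀ Y - ⨍ Z in ball X₀ (d/2), G₀ Z| * (Kζ * ((m₁ * d) ^ (n+2))⁻¹))) := by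
    refine (integrable_indicator_iff measurableSet_closedBall).mpr ?_
    have h1 : IntegrableOn (fun Y => G₀ Y - ⨍ Z in ball X₀ (d/2), G₀ Z)
        (closedBall X₀ (d/2)) := hG₀cb.sub (integrableOn_const
          measure_closedBall_lt_top.ne)
    simpa [Real.norm_eq_abs, IntegrableOn] using (h1.norm.mul_const (Kζ * ((m₁ * d) ^ (n+2))⁻¹))
  have hcbae : closedBall X₀ (d/2) =ᵐ[volume] ball X₀ (d/2) := by
    rw [MeasureTheory.ae_eq_set]
    constructor
    · rw [closedBall_diff_ball]
      exact measure_mono_null (subset_refl _) (Measure.addHaar_sphere volume X₀ (d/2))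
    · rw [Set.diff_eq_empty.mpr ball_subset_closedBall]
      exact measure_empty
  have hP := hPoincare X₀ (d/2) (by linarith) hballs
  have hμ0 : (0:ℝ) ≤ (μ (ball X₀ (d/2))).toReal := ENNReal.toReal_nonneg
  have hP' : (∫ Y in ball X₀ (d/2), |G₀ Y - ⨍ Z in ball X₀ (d/2), G₀ Z|)
      ≤ max CP 0 * (d/2) * (Cμ * d ^ n) := by
    calc (∫ Y in ball X₀ (d/2), |G₀ Y - ⨍ Z in ball X₀ (d/2), G₀ Z|)
        ≤ CP * (d/2) * (μ (ball X₀ (d/2))).toReal := hP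
      _ ≤ max CP 0 * (d/2) * (μ (ball X₀ (d/2))).toReal := by
          refine mul_le_mul_of_nonneg_right (mul_le_mul_of_nonneg_right
            (le_max_left _ _) (by linarith)) hμ0
      _ ≤ max CP 0 * (d/2) * (Cμ * d ^ n) := by
          refine mul_le_mul_of_nonneg_left (hweak X₀ hX₀) ?_
          exact mul_nonneg (le_max_right _ _) (by linarith)
  calc ‖∫ Y, (G₀ Y - ⨍ Z in ball X₀ (d/2), G₀ Z) •
      ((β X₀ ^ (n+1))⁻¹ • ((β X₀)⁻¹ • fderiv ℝ ζ ((β X₀)⁻¹ • (X₀ - Y))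
          + (-(β X₀ ^ 2)⁻¹ * fderiv ℝ ζ ((β X₀)⁻¹ • (X₀ - Y)) (X₀ - Y)) • fderiv ℝ β X₀)
        + ζ ((β X₀)⁻¹ • (X₀ - Y)) •
          ((-(((n+1 : ℕ) : ℝ) * β X₀ ^ (n + 1 - 1)) / (β X₀ ^ (n+1)) ^ 2) • fderiv ℝ β X₀))‖
      ≤ ∫ Y, (closedBall X₀ (d/2)).indicator
          (fun Y => |G₀ Y - ⨍ Z in ball X₀ (d/2), G₀ Z| * (Kζ * ((m₁ * d) ^ (n+2))⁻¹)) Y :=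
        norm_integral_le_of_norm_le hind_int (Filter.Eventually.of_forall hnorm_le)
    _ = ∫ Y in closedBall X₀ (d/2),
          |G₀ Y - ⨍ Z in ball X₀ (d/2), G₀ Z| * (Kζ * ((m₁ * d) ^ (n+2))⁻¹) :=
        integral_indicator measurableSet_closedBall
    _ = (∫ Y in closedBall X₀ (d/2), |G₀ Y - ⨍ Z in ball X₀ (d/2), G₀ Z|)
          * (Kζ * ((m₁ * d) ^ (n+2))⁻¹) := integral_mul_const _ _
    _ = (∫ Y in ball X₀ (d/2), |G₀ Y - ⨍ Z in ball X₀ (d/2), G₀ Z|)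
          * (Kζ * ((m₁ * d) ^ (n+2))⁻¹) := by rw [setIntegral_congr_set hcbae]
    _ ≤ (max CP 0 * (d/2) * (Cμ * d ^ n)) * (Kζ * ((m₁ * d) ^ (n+2))⁻¹) :=
        mul_le_mul_of_nonneg_right hP' hKd0
    _ = max CP 0 * Kζ / (2 * m₁ ^ (n+2)) * Cμ / d := by
        rw [mul_pow]
        field_simp
        ring
    _ ≤ max 1 (max CP 0 * Kζ / (2 * m₁ ^ (n+2))) * Cμ / d := by
        gcongr
        exact le_max_right _ _
end

section
/- Let $\Omega \subset \mathbb{R}^{n+1}$ be open with $d$-ADR boundary, $Q_0 \in \mathbb{D}$, and let $\{t_Q\}_{Q \subseteq Q_0}$ be the modified Carleson tents built from pairwise-disjoint restricted Whitney regions $U_Q^r$ (half-open Whitney cubes, each assigned to exactly one $Q$). Then: (i) the unmodified tent $\tau_Q := \Omega \setminus \bigcup_{y \in \partial\Omega \setminus Q}\Gamma(y)$ satisfies $\tau_Q \subseteq t_Q$ for all $Q \subseteq Q_0$; (ii) if $Q_1 \cap Q_2 = \emptyset$ then $t_{Q_1} \cap t_{Q_2} = \emptyset$; (iii) if $Q_1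 \subseteq Q_2$ then $t_{Q_1} \subseteq t_{Q_2}$; (iv) $t_{Q_0} = T_{Q_0}$, the full Carleson box. -/
open MeasureTheory Metric Set ENNReal

/-- A Christ-type dyadic system on a set `E ⊆ ℝ^{n+1}` with respect to the measure `σ`. -/
structure DyadicSystem {n : ℕ} (E : Set (EuclideanSpace ℝ (Fin (n+1))))
    (σ : Measure (EuclideanSpace ℝ (Fin (n+1)))) where
  cubes : Set (Set (EuclideanSpace ℝ (Fin (n+1))))
  gen : Set (EuclideanSpace ℝ (Fin (n+1))) → ℤ
  center : Set (EuclideanSpace ℝ (Fin (n+1))) → EuclideanSpace ℝ (Fin (n+1))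
  c₁ : ℝ
  C₁ : ℝ
  γ : ℝ
  c₁_pos : 0 < c₁
  C₁_pos : 0 < C₁
  γ_pos : 0 < γ
  borel : ∀ Q ∈ cubes, MeasurableSet Q
  cubes_subset : ∀ Q ∈ cubes, Q ⊆ E
  nonempty : ∀ Q ∈ cubes, Q.Nonempty
  nested : ∀ Q ∈ cubes, ∀ P ∈ cubes, Q ∩ P = ∅ ∨ Q ⊆ P ∨ P ⊆ Q
  covers : ∀ k : ℤ, ⋃₀ {Q | Q ∈ cubes ∧ gen Q = k} = E
  center_mem : ∀ Q ∈ cubes, center Q ∈ E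
  subset_ball : ∀ Q ∈ cubes, Q ⊆ ball (center Q) (C₁ * (2:ℝ) ^ (-gen Q))
  ball_subset : ∀ Q ∈ cubes, E ∩ ball (center Q) (c₁ * (2:ℝ) ^ (-gen Q)) ⊆ Q
  thin_boundary : ∀ Q ∈ cubes, ∀ ϱ ∈ Ioo (0:ℝ) c₁,
    σ {x | x ∈ Q ∧ Metric.infDist x (E \ Q) ≤ ϱ * (2:ℝ) ^ (-gen Q)} ≤
      ENNReal.ofReal (C₁ * ϱ ^ γ) * σ Q

/-- Properties of the modified Carleson tents `t_Q` built from
pairwise disjoint restricted Whitney regions: (i) `τ_Q ⊆ t_Q`; (ii) tents over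
disjoint cubes are disjoint; (iii) tents are monotone in the cube; (iv) `t_{Q₀} = T_{Q₀}`. -/
theorem statement16 {n : ℕ} {d : ℝ} (hd0 : 0 < d) (hdn : d ≤ n)
    (Ω : Set (EuclideanSpace ℝ (Fin (n+1)))) (hΩ : IsOpen Ω)
    (E : Set (EuclideanSpace ℝ (Fin (n+1)))) (hEdef : E = frontier Ω) (hEne : E.Nonempty)
    (σ : Measure (EuclideanSpace ℝ (Fin (n+1))))
    (hσ : σ = (μH[d] : Measure (EuclideanSpace ℝ (Fin (n+1)))).restrict E)
    (D : DyadicSystem E σ)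
    -- the fixed cube Q₀
    (Q₀ : Set (EuclideanSpace ℝ (Fin (n+1)))) (hQ₀ : Q₀ ∈ D.cubes)
    -- Whitney collections and their restricted versions
    (𝒲 𝒲r : Set (EuclideanSpace ℝ (Fin (n+1))) →
      Set (Set (EuclideanSpace ℝ (Fin (n+1)))))
    -- Whitney regions, restricted Whitney regions, dyadic cones, Carleson boxes
    -- and modified Carleson tents
    (U Ur T t : Set (EuclideanSpace ℝ (Fin (n+1))) → Set (EuclideanSpace ℝ (Fin (n+1))))
    (Γ : EuclideanSpace ℝ (Fin (n+1)) → Set (EuclideanSpace ℝ (Fin (n+1))))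
    (hU : ∀ Q, U Q = ⋃₀ (𝒲 Q))
    (hUr : ∀ Q, Ur Q = ⋃₀ (𝒲r Q))
    (hΓ : ∀ y, Γ y = ⋃ Q ∈ {Q | Q ∈ D.cubes ∧ y ∈ Q}, U Q)
    (hT : ∀ Q, T Q = ⋃ Q' ∈ {Q' | Q' ∈ D.cubes ∧ Q' ⊆ Q}, U Q')
    (ht : ∀ Q, t Q = ⋃ Q' ∈ {Q' | Q' ∈ D.cubes ∧ Q' ⊆ Q₀ ∧ Q' ⊆ Q}, Ur Q')
    -- the restricted collections refine the original ones …
    (h𝒲r_sub : ∀ Q ∈ D.cubes, Q ⊆ Q₀ → 𝒲r Q ⊆ 𝒲 Q)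
    -- … the restricted Whitney regions are pairwise disjoint …
    (hdisjUr : ∀ Q ∈ D.cubes, ∀ Q' ∈ D.cubes, Q ⊆ Q₀ → Q' ⊆ Q₀ → Q ≠ Q' →
      Disjoint (Ur Q) (Ur Q'))
    -- … the reassignment is exhaustive within Q₀ …
    (hexhaust : (⋃ Q ∈ {Q | Q ∈ D.cubes ∧ Q ⊆ Q₀}, U Q) ⊆
      ⋃ Q ∈ {Q | Q ∈ D.cubes ∧ Q ⊆ Q₀}, Ur Q)
    -- … and the Whitney regions cover Ω
    (hcover : Ω ⊆ ⋃ Q ∈ D.cubes, U Q) :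
    -- (i) τ_Q ⊆ t_Q
    (∀ Q ∈ D.cubes, Q ⊆ Q₀ → Ω \ (⋃ y ∈ E \ Q, Γ y) ⊆ t Q) ∧
    -- (ii) disjoint cubes give disjoint tents
    (∀ Q₁ ∈ D.cubes, ∀ Q₂ ∈ D.cubes, Q₁ ⊆ Q₀ → Q₂ ⊆ Q₀ → Q₁ ∩ Q₂ = ∅ →
      t Q₁ ∩ t Q₂ = ∅) ∧
    -- (iii) monotone tents
    (∀ Q₁ ∈ D.cubes, ∀ Q₂ ∈ D.cubes, Q₁ ⊆ Q₀ → Q₂ ⊆ Q₀ → Q₁ ⊆ Q₂ → t Q₁ ⊆ t Q₂) ∧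
    -- (iv) the top tent is the full Carleson box
    t Q₀ = T Q₀ := by

  have hUrU : ∀ Q ∈ D.cubes, Q ⊆ Q₀ → Ur Q ⊆ U Q := by
    intro Q hQ hQsub
    rw [hUr, hU]
    exact sUnion_mono (h𝒲r_sub Q hQ hQsub)
  -- key lemma: if x is in no cone over E \ Q and x ∈ U P, then P ⊆ Q
  have key : ∀ Q, ∀ x, x ∉ (⋃ y ∈ E \ Q, Γ y) → ∀ P ∈ D.cubes, x ∈ U P → P ⊆ Q := by
    intro Q x hx P hP hxP
    by_contra hPQ
    obtain ⟨y, hyP, hyQ⟩ := not_subset.mp hPQ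
    apply hx
    refine mem_biUnion ⟨D.cubes_subset P hP hyP, hyQ⟩ ?_
    rw [hΓ]
    exact mem_biUnion ⟨hP, hyP⟩ hxP
  refine ⟨?_, ?_, ?_, ?_⟩
  · -- (i)
    rintro Q hQ hQsub x ⟨hxΩ, hx⟩
    obtain ⟨P, hP, hxP⟩ := mem_iUnion₂.mp (hcover hxΩ)
    have hPQ : P ⊆ Q := key Q x hx P hP hxP
    have hx2 : x ∈ ⋃ Q ∈ {Q | Q ∈ D.cubes ∧ Q ⊆ Q₀}, Ur Q :=
      hexhaust (mem_biUnion ⟨hP, hPQ.trans hQsub⟩ hxP)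
    obtain ⟨Q3, ⟨hQ3, hQ3Q₀⟩, hxQ3⟩ := mem_iUnion₂.mp hx2
    have hQ3Q : Q3 ⊆ Q := key Q x hx Q3 hQ3 (hUrU Q3 hQ3 hQ3Q₀ hxQ3)
    rw [ht]
    exact mem_biUnion ⟨hQ3, hQ3Q₀, hQ3Q⟩ hxQ3
  · -- (ii)
    intro Q₁ hQ₁ Q₂ hQ₂ hs₁ hs₂ hdis
    ext x
    simp only [mem_inter_iff, mem_empty_iff_false, iff_false, not_and]
    intro hx₁ hx₂
    rw [ht] at hx₁ hx₂
    obtain ⟨P₁, ⟨hP₁, hP₁Q₀, hP₁Q⟩, hxP₁⟩ := mem_iUnion₂.mp hx₁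
    obtain ⟨P₂, ⟨hP₂, hP₂Q₀, hP₂Q⟩, hxP₂⟩ := mem_iUnion₂.mp hx₂
    have hne : P₁ ≠ P₂ := by
      rintro rfl
      obtain ⟨z, hz⟩ := D.nonempty P₁ hP₁
      have : z ∈ Q₁ ∩ Q₂ := ⟨hP₁Q hz, hP₂Q hz⟩
      simp [hdis] at this
    exact absurd rfl ((hdisjUr P₁ hP₁ P₂ hP₂ hP₁Q₀ hP₂Q₀ hne).ne_of_mem hxP₁ hxP₂)
  · -- (iii)
    intro Q₁ _ Q₂ _ _ _ h12
    rw [ht, ht]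
    refine iUnion₂_mono' fun P hP => ⟨P, ⟨hP.1, hP.2.1, hP.2.2.trans h12⟩, le_rfl⟩
  · -- (iv)
    rw [ht, hT]
    apply Subset.antisymm
    · refine iUnion₂_mono' fun P hP => ⟨P, ⟨hP.1, hP.2.1⟩, hUrU P hP.1 hP.2.1⟩
    · exact hexhaust.trans
        (iUnion₂_mono' fun P hP => ⟨P, ⟨hP.1, hP.2, hP.2⟩, le_rfl⟩)
end

section
/- Let $\Omega \subset \mathbb{R}^{n+1}$ be open with $d$-ADR boundary and corkscrew condition, $Q_0 \in \mathbb{D}$, and let $\{Q_j\} \subset \mathbb{D}_{Q_0}$ with coefficients $\alpha_j$ satisfy: $f = \sum_j \alpha_j 1_{Q_j} \in BMO(\partial\Omega)$, the Carleson packing condition with constant $C_0$, and $\sup_j|\alpha_j| \lesssim \|f\|_{BMO}$. Then $F_0 := \sum_j \alpha_j 1_{t_{Q_j}}$ (sum over modified Carleson tents) converges non-tangentially to $f$: $\lim_{Y \to x \text{ N.T.}} F_0(Y) = f(x)$ for $\sigma$-a.e. $x \in \partial\Omega$, where the limit is through the dyadic cone $\Gamma(x)$. -/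
/-!
For `σ`-a.e. `x`, only finitely many `Q_j` contain `x` (Borel–Cantelli: the packing condition
makes `∑ σ(Q_j)` finite), and `x` keeps a positive distance from `E \ Q_j` when `x ∈ Q_j`
(interior thin boundary) and from `Q_j` when `x ∉ Q_j` (exterior thin boundary).

Let `Y ∈ Γ(x)` tend to `x`. If `x ∈ Q_j`, then eventually `Y ∈ t_{Q_j}`: otherwise `Y` lies in a
cone `Γ(y)` with `y ∈ E \ Q_j`, and `|x - y| ≲ |x - Y|` because `Y` sits at height
`≈ δ(Y) ≤ |x - Y|` above both `x` and `y`. If instead `Y ∈ t_{Q_j} ⊆ T_{Q_j}` with `x ∉ Q_j`, then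
`Y` lies in a Whitney region of some `Q'' ⊆ Q_j`, so `dist(x, Q_j) ≲ |x - Y| ≲ ℓ(Q'') ≲ ℓ(Q_j)`,
the last step by Ahlfors regularity. Thus `x` lies in a fixed dilate of `Q_j`. By ADR these
dilates have measure `≲ σ(Q_j)` (up to finitely many large cubes), so a.e. `x` lies in only
finitely many of them, and for those `j` the positive distance `dist(x, Q_j)` rules out
`Y ∈ t_{Q_j}` once `Y` is close to `x`. Near `x` the tents containing `Y` are therefore exactly
those over the cubes containing `x`, and `F₀(Y) = f(x)`.
-/

open MeasureTheory Metric Set ENNReal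

open Filter Topology

lemma ae_pos_of_measure_sublevel_le {X : Type*} [MeasurableSpace X] {μ : Measure X} {S : Set X}
    {g : X → ℝ} {C γ c L : ℝ} {m : ℝ≥0∞} (hγ : 0 < γ) (hc : 0 < c) (hL : 0 < L) (hm : m ≠ ∞)
    (h : ∀ ϱ ∈ Ioo (0:ℝ) c, μ {x | x ∈ S ∧ g x ≤ ϱ * L} ≤ ENNReal.ofReal (C * ϱ ^ γ) * m) :
    ∀ᵐ x ∂μ, x ∈ S → 0 < g x := by
  have hlim : Tendsto (fun ϱ : ℝ => ENNReal.ofReal (C * ϱ ^ γ) * m) (𝓝[>] 0) (𝓝 0) := by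
    have hcont : Tendsto (fun ϱ : ℝ => C * ϱ ^ γ) (𝓝[>] 0) (𝓝 0) := by
      refine (Continuous.tendsto' ?_ 0 0 (by simp [Real.zero_rpow hγ.ne'])).mono_left
        nhdsWithin_le_nhds
      exact continuous_const.mul (Real.continuous_rpow_const hγ.le)
    simpa using ENNReal.Tendsto.mul_const (ENNReal.tendsto_ofReal hcont) (Or.inr hm)
  have hnull : μ {x | x ∈ S ∧ g x ≤ 0} = 0 := by
    refine le_antisymm (ge_of_tendsto hlim ?_) zero_le
    filter_upwards [Ioo_mem_nhdsGT hc] with ϱ hϱ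
    refine (measure_mono fun x hx => ?_).trans (h ϱ hϱ)
    exact ⟨hx.1, hx.2.trans (by nlinarith [hϱ.1])⟩
  filter_upwards [measure_eq_zero_iff_ae_notMem.1 hnull] with x hx hxS
  exact not_le.1 fun hg => hx ⟨hxS, hg⟩

lemma eventually_nhdsWithin_of_infDist_pos {X : Type*} [PseudoMetricSpace X] {x : X}
    {s G : Set X} {p : X → Prop} {K : ℝ} (hK : 0 ≤ K) (hpos : 0 < infDist x s)
    (h : ∀ Y ∈ G, ¬ p Y → infDist x s ≤ K * dist x Y) : ∀ᶠ Y in 𝓝[G] x, p Y := by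
  filter_upwards [self_mem_nhdsWithin,
    mem_nhdsWithin_of_mem_nhds (ball_mem_nhds x (by positivity : 0 < infDist x s / (K + 1)))]
    with Y hYG hY
  by_contra hp
  rw [mem_ball', lt_div_iff₀ (by positivity)] at hY
  nlinarith [h Y hYG hp, dist_nonneg (x := x) (y := Y)]

lemma eventually_tsum_indicator_eq {X Z : Type*} {l : Filter X} {x : Z} {s : ℕ → Set Z}
    {W : ℕ → Set X} (α : ℕ → ℝ) (hfin : {j | x ∈ s j}.Finite)
    (hin : ∀ j, x ∈ s j → ∀ᶠ Y in l, Y ∈ W j) (hout : ∀ᶠ Y in l, ∀ j, Y ∈ W j → x ∈ s j) :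
    ∀ᶠ Y in l, ∑' j, (W j).indicator (fun _ => α j) Y = ∑' j, (s j).indicator (fun _ => α j) x := by
  filter_upwards [(hfin.eventually_all).2 hin, hout] with Y hY hY'
  refine tsum_congr fun j => ?_
  by_cases hj : x ∈ s j
  · simp [hj, hY j hj]
  · simp [hj, mt (hY' j) hj]

lemma exists_pos_le_ofReal_lt {e : ℝ≥0∞} (he : 0 < e) {s : ℝ} (hs : 0 < s) :
    ∃ r : ℝ, 0 < r ∧ r ≤ s ∧ ENNReal.ofReal r < e := by
  obtain ⟨r, -, hr0, hre⟩ := ENNReal.lt_iff_exists_real_btwn.1 he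
  exact ⟨min r s, lt_min (ENNReal.ofReal_pos.1 hr0) hs, min_le_right _ _,
    (ENNReal.ofReal_le_ofReal (min_le_left _ _)).trans_lt hre⟩

lemma measure_le_of_inter_subset {X : Type*} [MeasurableSpace X] {μ : Measure X} {E S P : Set X}
    (hE : μ Eᶜ = 0) (h : E ∩ S ⊆ P) : μ S ≤ μ P :=
  measure_mono_ae <| by
    filter_upwards [measure_eq_zero_iff_ae_notMem.1 hE] with x hx hxS
    exact h ⟨not_not.1 hx, hxS⟩
lemma tsum_measure_ne_top_of_packing {X : Type*} [MeasurableSpace X] {μ : Measure X}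
    {Qs : ℕ → Set X} {Q₀ : Set X} {C₀ : ℝ≥0∞} (hQs : ∀ j, Qs j ⊆ Q₀)
    (hpack : ∑' j : {j : ℕ // Qs j ⊆ Q₀}, μ (Qs j.1) ≤ C₀ * μ Q₀) (hC₀ : C₀ ≠ ∞)
    (hQ₀ : μ Q₀ ≠ ∞) : ∑' j, μ (Qs j) ≠ ∞ := by
  rw [← (Equiv.subtypeUnivEquiv hQs).tsum_eq]
  exact ne_top_of_le_ne_top (mul_ne_top hC₀ hQ₀) hpack

def IsADR {X : Type*} [PseudoMetricSpace X] [MeasurableSpace X] (E : Set X) (μ : Measure X)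
    (C : ℝ≥0∞) (d : ℝ) : Prop :=
  ∀ x ∈ E, ∀ r : ℝ, 0 < r → ENNReal.ofReal r < ediam E →
    ENNReal.ofReal r ^ d / C ≤ μ (ball x r) ∧ μ (ball x r) ≤ C * ENNReal.ofReal r ^ d

namespace IsADR

variable {X : Type*} [PseudoMetricSpace X] [MeasurableSpace X] {E : Set X} {μ : Measure X}
  {C : ℝ≥0∞} {d : ℝ}

lemma ofReal_rpow_le_mul (h : IsADR E μ C d) (hC0 : C ≠ 0) (hC : C ≠ ∞) {x : X} (hx : x ∈ E)
    {r : ℝ} (hr : 0 < r) (hrE : ENNReal.ofReal r < ediam E) :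
    ENNReal.ofReal r ^ d ≤ C * μ (ball x r) := by
  rw [mul_comm, ← ENNReal.div_le_iff hC0 hC]
  exact (h x hx r hr hrE).1

lemma exists_le_mul_of_measure_ball_le (h : IsADR E μ C d) (hd : 0 < d) (hC : 1 ≤ C)
    (hC' : C ≠ ∞) : ∃ κ : ℝ, 0 < κ ∧ ∀ x ∈ E, ∀ y ∈ E, ∀ r R : ℝ, 0 < r → 0 < R →
      ENNReal.ofReal r < ediam E → μ (ball x r) ≤ μ (ball y R) → r ≤ κ * R := by
  have hC0 : C ≠ 0 := (zero_lt_one.trans_le hC).ne'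
  have hκ : C ^ (2 / d) ≠ ∞ := ENNReal.rpow_ne_top_of_nonneg (by positivity) hC'
  have hκ1 : 1 ≤ (C ^ (2 / d)).toReal := by
    rw [← ENNReal.toReal_one]
    exact ENNReal.toReal_mono hκ (ENNReal.one_le_rpow hC (by positivity))
  refine ⟨(C ^ (2 / d)).toReal, by positivity, fun x hx y hy r R hr hR hrE hμ => ?_⟩
  rcases lt_or_ge (ENNReal.ofReal R) (ediam E) with hRE | hRE
  · have hpow : ENNReal.ofReal r ^ d ≤ (C ^ (2 / d) * ENNReal.ofReal R) ^ d := by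
      rw [ENNReal.mul_rpow_of_nonneg _ _ hd.le, ← ENNReal.rpow_mul, div_mul_cancel₀ _ hd.ne',
        ENNReal.rpow_two, sq, mul_assoc]
      calc ENNReal.ofReal r ^ d ≤ C * μ (ball x r) := h.ofReal_rpow_le_mul hC0 hC' hx hr hrE
        _ ≤ C * (C * ENNReal.ofReal R ^ d) := by gcongr; exact hμ.trans (h y hy R hR hRE).2
    have := (ENNReal.ofReal_le_iff_le_toReal (by finiteness)).1
      ((ENNReal.rpow_le_rpow_iff hd).1 hpow)
    rwa [ENNReal.toReal_mul, ENNReal.toReal_ofReal hR.le] at this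
  · have hrR : r < R := (ENNReal.ofReal_lt_ofReal_iff hR).1 (hrE.trans_le hRE)
    nlinarith

lemma measure_ball_le_mul_measure_ball (h : IsADR E μ C d) (hd : 0 ≤ d) (hC0 : C ≠ 0)
    (hC : C ≠ ∞) {x : X} (hx : x ∈ E) {r R : ℝ} (hr : 0 < r) (hrR : r ≤ R)
    (hRE : ENNReal.ofReal R < ediam E) :
    μ (ball x R) ≤ C * C * ENNReal.ofReal (R / r) ^ d * μ (ball x r) := by
  have hR : 0 < R := hr.trans_le hrR
  calc μ (ball x R) ≤ C * ENNReal.ofReal R ^ d := (h x hx R hR hRE).2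
    _ = C * ENNReal.ofReal (R / r) ^ d * ENNReal.ofReal r ^ d := by
      rw [mul_assoc, ← ENNReal.mul_rpow_of_nonneg _ _ hd, ← ENNReal.ofReal_mul (by positivity),
        div_mul_cancel₀ _ hr.ne']
    _ ≤ C * ENNReal.ofReal (R / r) ^ d * (C * μ (ball x r)) := by
      gcongr
      exact h.ofReal_rpow_le_mul hC0 hC hx hr ((ENNReal.ofReal_le_ofReal hrR).trans_lt hRE)
    _ = C * C * ENNReal.ofReal (R / r) ^ d * μ (ball x r) := by ring

lemma measure_univ_ne_top [ProperSpace X] (h : IsADR E μ C d) (hC : C ≠ ∞) (hE : μ Eᶜ = 0)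
    (h0 : 0 < ediam E) (htop : ediam E ≠ ∞) : μ univ ≠ ∞ := by
  obtain ⟨ρ, hρ, -, hρE⟩ := exists_pos_le_ofReal_lt h0 one_pos
  obtain ⟨t, htE, htfin, hcover⟩ := finite_approx_of_totallyBounded
    ((isBounded_iff_ediam_ne_top.2 htop).isCompact_closure.totallyBounded.subset subset_closure)
    ρ hρ
  rw [← measure_congr (ae_eq_univ.2 hE)]
  refine ((measure_mono hcover).trans_lt (measure_biUnion_lt_top htfin fun y hy => ?_)).ne
  exact (ne_top_of_le_ne_top (by finiteness) (h y (htE hy) ρ hρ hρE).2).lt_top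

lemma measure_ball_ne_top [ProperSpace X] (h : IsADR E μ C d) (hC : C ≠ ∞) (hE : μ Eᶜ = 0)
    (h0 : 0 < ediam E) {x : X} (hx : x ∈ E) (R : ℝ) : μ (ball x R) ≠ ∞ := by
  rcases le_or_gt R 0 with hR | hR
  · simp [ball_eq_empty.2 hR]
  rcases lt_or_ge (ENNReal.ofReal R) (ediam E) with hRE | hRE
  · exact ne_top_of_le_ne_top (by finiteness) (h x hx R hR hRE).2
  · exact ne_top_of_le_ne_top (h.measure_univ_ne_top hC hE h0 (ne_top_of_le_ne_top
      ENNReal.ofReal_ne_top hRE)) (measure_mono (subset_univ _))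

end IsADR

namespace DyadicSystem

variable {n : ℕ} {E : Set (EuclideanSpace ℝ (Fin (n+1)))}
  {σ : Measure (EuclideanSpace ℝ (Fin (n+1)))} (D : DyadicSystem E σ) {C : ℝ≥0∞} {d : ℝ}

noncomputable def side (Q : Set (EuclideanSpace ℝ (Fin (n+1)))) : ℝ := (2:ℝ) ^ (-D.gen Q)

lemma side_pos (Q : Set (EuclideanSpace ℝ (Fin (n+1)))) : 0 < D.side Q := zpow_pos two_pos _

lemma measure_ball_le (hE : σ Eᶜ = 0) {Q : Set (EuclideanSpace ℝ (Fin (n+1)))}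
    (hQ : Q ∈ D.cubes) {r : ℝ} (hr : r ≤ D.c₁ * D.side Q) : σ (ball (D.center Q) r) ≤ σ Q :=
  measure_le_of_inter_subset hE fun _ hz => D.ball_subset Q hQ ⟨hz.1, ball_subset_ball hr hz.2⟩

lemma measure_ne_top (hADR : IsADR E σ C d) (hC : C ≠ ∞) (hE : σ Eᶜ = 0) (h0 : 0 < ediam E)
    {Q : Set (EuclideanSpace ℝ (Fin (n+1)))} (hQ : Q ∈ D.cubes) : σ Q ≠ ∞ :=
  ne_top_of_le_ne_top (hADR.measure_ball_ne_top hC hE h0 (D.center_mem Q hQ) _)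
    (measure_mono (D.subset_ball Q hQ))

lemma exists_le_mul_side_of_subset (hADR : IsADR E σ C d) (hd : 0 < d) (hC : 1 ≤ C)
    (hC' : C ≠ ∞) (hE : σ Eᶜ = 0) : ∃ κ : ℝ, 0 < κ ∧ ∀ Q ∈ D.cubes, ∀ P ∈ D.cubes, Q ⊆ P →
      ∀ r : ℝ, r ≤ D.c₁ * D.side Q → ENNReal.ofReal r < ediam E → r ≤ κ * D.side P := by
  obtain ⟨κ, hκ, hcmp⟩ := hADR.exists_le_mul_of_measure_ball_le hd hC hC'
  have := D.C₁_pos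
  refine ⟨κ * D.C₁, by positivity, fun Q hQ P hP hQP r hr hrE => ?_⟩
  rcases le_or_gt r 0 with hr0 | hr0
  · exact hr0.trans (by have := D.side_pos P; positivity)
  rw [mul_assoc]
  refine hcmp _ (D.center_mem Q hQ) _ (D.center_mem P hP) r _ hr0
    (mul_pos D.C₁_pos (D.side_pos P)) hrE ?_
  exact (D.measure_ball_le hE hQ hr).trans
    ((measure_mono hQP).trans (measure_mono (D.subset_ball P hP)))

lemma exists_le_measure_of_le_side (hADR : IsADR E σ C d) (hC : C ≠ ∞) (hE : σ Eᶜ = 0)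
    (h0 : 0 < ediam E) {η : ℝ} (hη : 0 < η) :
    ∃ m : ℝ≥0∞, m ≠ 0 ∧ ∀ Q ∈ D.cubes, η ≤ D.side Q → m ≤ σ Q := by
  obtain ⟨r, hr, hrη, hrE⟩ := exists_pos_le_ofReal_lt h0 (mul_pos D.c₁_pos hη)
  refine ⟨ENNReal.ofReal r ^ d / C, ?_, fun Q hQ hηQ => ?_⟩
  · exact ENNReal.div_ne_zero.2 ⟨(ENNReal.rpow_pos (ENNReal.ofReal_pos.2 hr)
      ENNReal.ofReal_ne_top).ne', hC⟩
  · refine (hADR _ (D.center_mem Q hQ) r hr hrE).1.trans (D.measure_ball_le hE hQ ?_)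
    exact hrη.trans (mul_le_mul_of_nonneg_left hηQ D.c₁_pos.le)

lemma measure_setOf_infDist_le_le (hADR : IsADR E σ C d) (hd : 0 ≤ d) (hC0 : C ≠ 0)
    (hC : C ≠ ∞) (hE : σ Eᶜ = 0) {M : ℝ} (hM : 0 ≤ M) {Q : Set (EuclideanSpace ℝ (Fin (n+1)))}
    (hQ : Q ∈ D.cubes) (hQE : ENNReal.ofReal ((M + D.C₁ + D.c₁) * D.side Q) < ediam E) :
    σ {y | infDist y Q ≤ M * D.side Q} ≤
      C * C * ENNReal.ofReal ((M + D.C₁ + D.c₁) / D.c₁) ^ d * σ Q := by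
  have hs := D.side_pos Q
  have hc := D.c₁_pos
  have hsub : {y | infDist y Q ≤ M * D.side Q} ⊆
      ball (D.center Q) ((M + D.C₁ + D.c₁) * D.side Q) := by
    intro y hy
    obtain ⟨z, hz, hyz⟩ := (infDist_lt_iff (D.nonempty Q hQ)).1
      (hy.out.trans_lt (by nlinarith : M * D.side Q < (M + D.c₁) * D.side Q))
    have hzc := mem_ball.1 (D.subset_ball Q hQ hz)
    rw [mem_ball]
    calc dist y (D.center Q) ≤ dist y z + dist z (D.center Q) := dist_triangle _ _ _
      _ < (M + D.c₁) * D.side Q + D.C₁ * D.side Q := add_lt_add hyz hzc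
      _ = (M + D.C₁ + D.c₁) * D.side Q := by ring
  have hdouble := hADR.measure_ball_le_mul_measure_ball hd hC0 hC (D.center_mem Q hQ)
    (r := D.c₁ * D.side Q) (by positivity) (by have := D.C₁_pos; nlinarith) hQE
  rw [mul_div_mul_right _ _ hs.ne'] at hdouble
  exact (measure_mono hsub).trans
    (hdouble.trans (mul_le_mul_right (D.measure_ball_le hE hQ le_rfl) _))

lemma ae_finite_setOf_infDist_le (hADR : IsADR E σ C d) (hd : 0 ≤ d) (hC : 1 ≤ C)
    (hC' : C ≠ ∞) (hE : σ Eᶜ = 0) (h0 : 0 < ediam E) {Qs : ℕ → Set (EuclideanSpace ℝ (Fin (n+1)))}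
    (hQs : ∀ j, Qs j ∈ D.cubes) (hsum : ∑' j, σ (Qs j) ≠ ∞) {M : ℝ} (hM : 0 ≤ M) :
    ∀ᵐ x ∂σ, {j | infDist x (Qs j) ≤ M * D.side (Qs j)}.Finite := by
  set R := M + D.C₁ + D.c₁
  -- Cubes of side `≥ ρ / R` carry mass `≥ m`, so there are finitely many of them; the
  -- `M`-neighbourhoods of the others stay below the diameter of `E`, where ADR applies.
  have hR : 0 < R := by have := D.C₁_pos; have := D.c₁_pos; positivity
  obtain ⟨ρ, hρ, -, hρE⟩ := exists_pos_le_ofReal_lt h0 one_pos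
  obtain ⟨m, hm, hmQ⟩ := D.exists_le_measure_of_le_side hADR hC' hE h0 (div_pos hρ hR)
  have hbig : {j | ρ / R ≤ D.side (Qs j)}.Finite :=
    (ENNReal.finite_const_le_of_tsum_ne_top hsum hm).subset fun j hj => hmQ _ (hQs j) hj
  set B : ℕ → Set (EuclideanSpace ℝ (Fin (n+1))) :=
    fun j => {y | R * D.side (Qs j) < ρ ∧ infDist y (Qs j) ≤ M * D.side (Qs j)}
  have hB : ∀ j, σ (B j) ≤ C * C * ENNReal.ofReal (R / D.c₁) ^ d * σ (Qs j) := by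
    intro j
    by_cases hsmall : R * D.side (Qs j) < ρ
    · simp only [B, hsmall, true_and]
      exact D.measure_setOf_infDist_le_le hADR hd (zero_lt_one.trans_le hC).ne' hC' hE hM (hQs j)
        ((ENNReal.ofReal_le_ofReal hsmall.le).trans_lt hρE)
    · simp [B, hsmall]
  have hBsum : ∑' j, σ (B j) ≠ ∞ :=
    ne_top_of_le_ne_top (ENNReal.mul_ne_top (by finiteness) hsum)
      ((ENNReal.tsum_le_tsum hB).trans_eq ENNReal.tsum_mul_left)
  filter_upwards [ae_finite_setOfPred_mem hBsum] with x hx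
  refine (hbig.union hx).subset fun j hj => ?_
  by_cases hbigj : ρ / R ≤ D.side (Qs j)
  · exact Or.inl hbigj
  · exact Or.inr ⟨by rw [not_le, lt_div_iff₀ hR] at hbigj; linarith, hj⟩

def IsWhitneyFamily (U : Set (EuclideanSpace ℝ (Fin (n+1))) → Set (EuclideanSpace ℝ (Fin (n+1))))
    (A : ℝ) : Prop :=
  ∀ Q ∈ D.cubes, ∀ Y ∈ U Q, infDist Y E ≤ A * D.side Q ∧ ∀ z ∈ Q, dist z Y ≤ A * infDist Y E

lemma exists_isWhitneyFamily
    {U : Set (EuclideanSpace ℝ (Fin (n+1))) → Set (EuclideanSpace ℝ (Fin (n+1)))} {cU CU : ℝ}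
    (hcU : 0 < cU) (hCU : 0 < CU) (hU : ∀ Q ∈ D.cubes, ∀ Y ∈ U Q,
      cU * D.side Q ≤ infDist Y E ∧ infDist Y E ≤ CU * D.side Q ∧ infDist Y Q ≤ CU * D.side Q) :
    ∃ A, 0 < A ∧ D.IsWhitneyFamily U A := by
  refine ⟨max CU ((2 * D.C₁ + CU) / cU), lt_max_of_lt_left hCU, fun Q hQ Y hY => ?_⟩
  obtain ⟨hlow, hup, hdist⟩ := hU Q hQ Y hY
  have hs := D.side_pos Q
  have := D.C₁_pos
  refine ⟨hup.trans (by gcongr; exact le_max_left _ _), fun z hz => ?_⟩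
  have hdiam : diam Q ≤ 2 * (D.C₁ * D.side Q) :=
    (diam_mono (D.subset_ball Q hQ) isBounded_ball).trans (diam_ball (by positivity))
  calc dist z Y = dist Y z := dist_comm _ _
    _ ≤ infDist Y Q + diam Q :=
      dist_le_infDist_add_diam (isBounded_ball.subset (D.subset_ball Q hQ)) hz
    _ ≤ (2 * D.C₁ + CU) / cU * (cU * D.side Q) := by
      rw [show (2 * D.C₁ + CU) / cU * (cU * D.side Q) = (2 * D.C₁ + CU) * D.side Q by
        field_simp]
      linarith
    _ ≤ max CU ((2 * D.C₁ + CU) / cU) * infDist Y E :=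
      mul_le_mul (le_max_right _ _) hlow (by positivity) (by positivity)

variable {D} {U : Set (EuclideanSpace ℝ (Fin (n+1))) → Set (EuclideanSpace ℝ (Fin (n+1)))}
  {A : ℝ} {Γ : EuclideanSpace ℝ (Fin (n+1)) → Set (EuclideanSpace ℝ (Fin (n+1)))}

lemma IsWhitneyFamily.dist_le (hU : D.IsWhitneyFamily U A) (hA : 0 ≤ A)
    {Q : Set (EuclideanSpace ℝ (Fin (n+1)))} (hQ : Q ∈ D.cubes)
    {Y z x : EuclideanSpace ℝ (Fin (n+1))}
    (hY : Y ∈ U Q) (hz : z ∈ Q) (hx : x ∈ E) : dist x z ≤ (1 + A) * dist x Y := by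
  have hδ : infDist Y E ≤ dist x Y := dist_comm Y x ▸ infDist_le_dist_of_mem hx
  calc dist x z ≤ dist x Y + dist z Y := dist_triangle_right _ _ _
    _ ≤ dist x Y + A * dist x Y := by gcongr; exact ((hU Q hQ Y hY).2 z hz).trans (by gcongr)
    _ = (1 + A) * dist x Y := by ring

lemma IsWhitneyFamily.dist_le_mul_side (hU : D.IsWhitneyFamily U A) (hA : 0 ≤ A)
    {Q P : Set (EuclideanSpace ℝ (Fin (n+1)))} (hQ : Q ∈ D.cubes) (hP : P ∈ D.cubes)
    {Y x : EuclideanSpace ℝ (Fin (n+1))} (hYQ : Y ∈ U Q) (hYP : Y ∈ U P) (hx : x ∈ Q) :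
    dist x Y ≤ A ^ 2 * D.side P :=
  calc dist x Y ≤ A * infDist Y E := (hU Q hQ Y hYQ).2 x hx
    _ ≤ A * (A * D.side P) := by gcongr; exact (hU P hP Y hYP).1
    _ = A ^ 2 * D.side P := by ring

lemma IsWhitneyFamily.eventually_mem_of_infDist_compl_pos (hU : D.IsWhitneyFamily U A)
    (hA : 0 ≤ A) (hΓ : ∀ y, Γ y = ⋃ Q ∈ {Q | Q ∈ D.cubes ∧ y ∈ Q}, U Q)
    {Ω τ Q : Set (EuclideanSpace ℝ (Fin (n+1)))} (hUΩ : ∀ Q ∈ D.cubes, U Q ⊆ Ω)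
    (hτ : Ω \ ⋃ y ∈ E \ Q, Γ y ⊆ τ) {x : EuclideanSpace ℝ (Fin (n+1))} (hx : x ∈ E)
    (hpos : 0 < infDist x (E \ Q)) : ∀ᶠ Y in 𝓝[Γ x] x, Y ∈ τ := by
  refine eventually_nhdsWithin_of_infDist_pos (K := 1 + A) (by linarith) hpos fun Y hY hYτ => ?_
  have hYΩ : Y ∈ Ω := by
    rw [hΓ x] at hY
    obtain ⟨Q', ⟨hQ', -⟩, hYQ'⟩ := mem_iUnion₂.1 hY
    exact hUΩ Q' hQ' hYQ'
  obtain ⟨y, hy, hYy⟩ := mem_iUnion₂.1 (not_not.1 fun h => hYτ (hτ ⟨hYΩ, h⟩))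
  rw [hΓ y] at hYy
  obtain ⟨Q', ⟨hQ', hyQ'⟩, hYQ'⟩ := mem_iUnion₂.1 hYy
  exact (infDist_le_dist_of_mem hy).trans (hU.dist_le hA hQ' hYQ' hyQ' hx)

lemma IsWhitneyFamily.infDist_le_of_mem_tent (hU : D.IsWhitneyFamily U A) (hA : 0 < A)
    (hΓ : ∀ y, Γ y = ⋃ Q ∈ {Q | Q ∈ D.cubes ∧ y ∈ Q}, U Q)
    {T : Set (EuclideanSpace ℝ (Fin (n+1))) → Set (EuclideanSpace ℝ (Fin (n+1)))}
    (hT : ∀ Q, T Q = ⋃ Q' ∈ {Q' | Q' ∈ D.cubes ∧ Q' ⊆ Q}, U Q') {κ : ℝ}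
    (hκ : ∀ Q ∈ D.cubes, ∀ P ∈ D.cubes, Q ⊆ P →
      ∀ r : ℝ, r ≤ D.c₁ * D.side Q → ENNReal.ofReal r < ediam E → r ≤ κ * D.side P)
    {P : Set (EuclideanSpace ℝ (Fin (n+1)))} (hP : P ∈ D.cubes)
    {x Y : EuclideanSpace ℝ (Fin (n+1))} (hx : x ∈ E) (hY : Y ∈ Γ x) (hYT : Y ∈ T P) :
    infDist x P ≤ (1 + A) * dist x Y ∧
      (ENNReal.ofReal (D.c₁ * dist x Y / A ^ 2) < ediam E →
        infDist x P ≤ (1 + A) * A ^ 2 * κ / D.c₁ * D.side P) := by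
  have hc := D.c₁_pos
  rw [hΓ x] at hY
  obtain ⟨Q', ⟨hQ', hxQ'⟩, hYQ'⟩ := mem_iUnion₂.1 hY
  rw [hT] at hYT
  obtain ⟨Q'', ⟨hQ'', hQ''P⟩, hYQ''⟩ := mem_iUnion₂.1 hYT
  obtain ⟨z, hz⟩ := D.nonempty Q'' hQ''
  have hnear : infDist x P ≤ (1 + A) * dist x Y :=
    (infDist_le_dist_of_mem (hQ''P hz)).trans (hU.dist_le hA.le hQ'' hYQ'' hz hx)
  refine ⟨hnear, fun hsmall => ?_⟩
  have hside : D.c₁ * dist x Y / A ^ 2 ≤ D.c₁ * D.side Q'' := by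
    rw [div_le_iff₀ (by positivity), mul_assoc, mul_comm (D.side Q'')]
    gcongr
    exact hU.dist_le_mul_side hA.le hQ' hQ'' hYQ' hYQ'' hxQ'
  have hscale := hκ Q'' hQ'' P hP hQ''P _ hside hsmall
  calc infDist x P ≤ (1 + A) * dist x Y := hnear
    _ = (1 + A) * A ^ 2 / D.c₁ * (D.c₁ * dist x Y / A ^ 2) := by field_simp
    _ ≤ (1 + A) * A ^ 2 / D.c₁ * (κ * D.side P) := by gcongr
    _ = (1 + A) * A ^ 2 * κ / D.c₁ * D.side P := by ring

lemma IsWhitneyFamily.eventually_mem_of_mem_tent (hU : D.IsWhitneyFamily U A) (hA : 0 < A)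
    (hΓ : ∀ y, Γ y = ⋃ Q ∈ {Q | Q ∈ D.cubes ∧ y ∈ Q}, U Q)
    {T : Set (EuclideanSpace ℝ (Fin (n+1))) → Set (EuclideanSpace ℝ (Fin (n+1)))}
    (hT : ∀ Q, T Q = ⋃ Q' ∈ {Q' | Q' ∈ D.cubes ∧ Q' ⊆ Q}, U Q') {κ : ℝ}
    (hκ : ∀ Q ∈ D.cubes, ∀ P ∈ D.cubes, Q ⊆ P →
      ∀ r : ℝ, r ≤ D.c₁ * D.side Q → ENNReal.ofReal r < ediam E → r ≤ κ * D.side P)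
    (h0 : 0 < ediam E) {Qs τ : ℕ → Set (EuclideanSpace ℝ (Fin (n+1)))}
    (hQs : ∀ j, Qs j ∈ D.cubes) (hτ : ∀ j, τ j ⊆ T (Qs j)) {x : EuclideanSpace ℝ (Fin (n+1))}
    (hx : x ∈ E) (hext : ∀ j, x ∉ Qs j → 0 < infDist x (Qs j))
    (hfin : {j | infDist x (Qs j) ≤ (1 + A) * A ^ 2 * κ / D.c₁ * D.side (Qs j)}.Finite) :
    ∀ᶠ Y in 𝓝[Γ x] x, ∀ j, Y ∈ τ j → x ∈ Qs j := by
  have hcone := fun Y (hY : Y ∈ Γ x) j (hYτ : Y ∈ τ j) =>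
    hU.infDist_le_of_mem_tent hA hΓ hT hκ (hQs j) hx hY (hτ j hYτ)
  have hclose : ∀ᶠ Y in 𝓝[Γ x] x, ENNReal.ofReal (D.c₁ * dist x Y / A ^ 2) < ediam E := by
    have : Continuous fun Y => ENNReal.ofReal (D.c₁ * dist x Y / A ^ 2) :=
      ENNReal.continuous_ofReal.comp (by fun_prop)
    have hlim : Tendsto (fun Y => ENNReal.ofReal (D.c₁ * dist x Y / A ^ 2)) (𝓝 x) (𝓝 0) := by
      simpa using this.tendsto x
    exact nhdsWithin_le_nhds (hlim.eventually_lt_const h0)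
  have hfar : ∀ j ∈ {j | infDist x (Qs j) ≤ (1 + A) * A ^ 2 * κ / D.c₁ * D.side (Qs j)},
      ∀ᶠ Y in 𝓝[Γ x] x, x ∉ Qs j → Y ∉ τ j := by
    intro j _
    by_cases hxj : x ∈ Qs j
    · exact Eventually.of_forall fun _ h => absurd hxj h
    · refine (eventually_nhdsWithin_of_infDist_pos (by positivity) (hext j hxj)
        fun Y hY hYτ => (hcone Y hY j (not_not.1 hYτ)).1).mono fun _ h _ => h
  filter_upwards [hfin.eventually_all.2 hfar, hclose, self_mem_nhdsWithin]
    with Y hfarY hcloseY hY j hYτ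
  by_contra hxj
  exact hfarY j ((hcone Y hY j hYτ).2 hcloseY) hxj hYτ

end DyadicSystem

theorem statement18_general {n : ℕ} {d : ℝ} (hd0 : 0 < d)
    (Ω : Set (EuclideanSpace ℝ (Fin (n+1))))
    (E : Set (EuclideanSpace ℝ (Fin (n+1)))) (hEdef : E = frontier Ω)
    (σ : Measure (EuclideanSpace ℝ (Fin (n+1))))
    (hσ : σ = (μH[d] : Measure (EuclideanSpace ℝ (Fin (n+1)))).restrict E)
    -- ∂Ω is d-ADR
    (CADR : ℝ≥0∞) (hCADR : 1 ≤ CADR) (hCADRfin : CADR ≠ ⊤)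
    (hADR : ∀ x ∈ E, ∀ r : ℝ, 0 < r → ENNReal.ofReal r < EMetric.diam E →
      ENNReal.ofReal r ^ d / CADR ≤ σ (ball x r) ∧ σ (ball x r) ≤ CADR * ENNReal.ofReal r ^ d)
    (D : DyadicSystem E σ)
    (ℓ : Set (EuclideanSpace ℝ (Fin (n+1))) → ℝ)
    (hℓ : ∀ Q, ℓ Q = (2:ℝ) ^ (-D.gen Q))
    -- the exterior thin-boundary property
    (hext : ∀ Q ∈ D.cubes, ∀ ϱ ∈ Ioo (0:ℝ) D.c₁,
      σ {x | x ∈ E \ Q ∧ Metric.infDist x Q ≤ ϱ * ℓ Q} ≤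
        ENNReal.ofReal (D.C₁ * ϱ ^ D.γ) * σ Q)
    -- Whitney regions, dyadic cones, Carleson boxes
    (U T : Set (EuclideanSpace ℝ (Fin (n+1))) → Set (EuclideanSpace ℝ (Fin (n+1))))
    (Γ : EuclideanSpace ℝ (Fin (n+1)) → Set (EuclideanSpace ℝ (Fin (n+1))))
    (hUΩ : ∀ Q ∈ D.cubes, U Q ⊆ Ω)
    (hΓ : ∀ y, Γ y = ⋃ Q ∈ {Q | Q ∈ D.cubes ∧ y ∈ Q}, U Q)
    (hT : ∀ Q, T Q = ⋃ Q' ∈ {Q' | Q' ∈ D.cubes ∧ Q' ⊆ Q}, U Q')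
    -- on U_Q, δ(Y) ≈ ℓ(Q) and dist(Y, Q) ≲ ℓ(Q)
    (cU CU : ℝ) (hcU : 0 < cU) (hCU : 0 < CU)
    (hδcomp : ∀ Q ∈ D.cubes, ∀ Y ∈ U Q,
      cU * ℓ Q ≤ Metric.infDist Y E ∧ Metric.infDist Y E ≤ CU * ℓ Q ∧
        Metric.infDist Y Q ≤ CU * ℓ Q)
    -- the fixed cube Q₀, the collection {Q_j} ⊆ 𝔻_{Q₀} and the coefficients α_j
    (Q₀ : Set (EuclideanSpace ℝ (Fin (n+1)))) (hQ₀ : Q₀ ∈ D.cubes)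
    (Qj : ℕ → Set (EuclideanSpace ℝ (Fin (n+1))))
    (hQj : ∀ j, Qj j ∈ D.cubes ∧ Qj j ⊆ Q₀)
    (α : ℕ → ℝ)
    -- Carleson packing condition with constant C₀
    (C₀ : ℝ≥0∞) (hC₀fin : C₀ ≠ ⊤)
    (hpack : ∀ Q ∈ D.cubes,
      (∑' j : {j : ℕ // Qj j ⊆ Q}, σ (Qj j.1)) ≤ C₀ * σ Q)
    -- the modified Carleson tents t_{Q}: τ_Q ⊆ t_Q ⊆ T_Q, monotone and disjoint
    (t : Set (EuclideanSpace ℝ (Fin (n+1))) → Set (EuclideanSpace ℝ (Fin (n+1))))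
    (ht1 : ∀ Q ∈ D.cubes, Q ⊆ Q₀ → t Q ⊆ T Q)
    (ht2 : ∀ Q ∈ D.cubes, Q ⊆ Q₀ → Ω \ (⋃ y ∈ E \ Q, Γ y) ⊆ t Q)
    -- the boundary function f and its tent extension F₀
    (f : EuclideanSpace ℝ (Fin (n+1)) → ℝ)
    (hf : ∀ x, f x = ∑' j, Set.indicator (Qj j) (fun _ => α j) x)
    (F₀ : EuclideanSpace ℝ (Fin (n+1)) → ℝ)
    (hF₀ : ∀ Y, F₀ Y = ∑' j, Set.indicator (t (Qj j)) (fun _ => α j) Y) :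
    ∀ᵐ x ∂σ, Filter.Tendsto F₀ (nhdsWithin x (Γ x)) (nhds (f x)) := by
  have hEm : MeasurableSet E := hEdef ▸ isClosed_frontier.measurableSet
  have hσE : σ Eᶜ = 0 := by
    rw [hσ, Measure.restrict_apply hEm.compl, compl_inter_self, measure_empty]
  rcases eq_zero_or_pos (ediam E) with h0 | h0
  -- ADR says nothing when `E` is at most a point, but then `σ = 0`.
  · have := Measure.nullSingletonClass_hausdorff (EuclideanSpace ℝ (Fin (n+1))) hd0
    rw [hσ, Measure.restrict_eq_zero.2 ((ediam_eq_zero_iff.1 h0).measure_zero _)]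
    simp
  obtain rfl : ℓ = D.side := funext hℓ
  have hsum : ∑' j, σ (Qj j) ≠ ∞ := tsum_measure_ne_top_of_packing (fun j => (hQj j).2)
    (hpack Q₀ hQ₀) hC₀fin (D.measure_ne_top hADR hCADRfin hσE h0 hQ₀)
  have hQfin : ∀ j, σ (Qj j) ≠ ∞ := fun j => ne_top_of_le_ne_top hsum (ENNReal.le_tsum j)
  obtain ⟨A, hA, hU⟩ := D.exists_isWhitneyFamily hcU hCU hδcomp
  obtain ⟨κ, hκ, hκP⟩ := D.exists_le_mul_side_of_subset hADR hd0 hCADR hCADRfin hσE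
  filter_upwards [hσ ▸ ae_restrict_mem hEm, ae_finite_setOfPred_mem hsum,
    ae_all_iff.2 fun j => ae_pos_of_measure_sublevel_le D.γ_pos D.c₁_pos (D.side_pos _) (hQfin j)
      (D.thin_boundary _ (hQj j).1),
    ae_all_iff.2 fun j => ae_pos_of_measure_sublevel_le D.γ_pos D.c₁_pos (D.side_pos _) (hQfin j)
      (hext _ (hQj j).1),
    D.ae_finite_setOf_infDist_le hADR hd0.le hCADR hCADRfin hσE h0 (fun j => (hQj j).1) hsum
      (M := (1 + A) * A ^ 2 * κ / D.c₁) (by have := D.c₁_pos; positivity)]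
    with x hxE hfin hint hextx hfinM
  refine tendsto_const_nhds.congr' (EventuallyEq.symm ?_)
  simp only [EventuallyEq, hF₀, hf x]
  exact eventually_tsum_indicator_eq α hfin
    (fun j hj => hU.eventually_mem_of_infDist_compl_pos hA.le hΓ hUΩ (ht2 _ (hQj j).1 (hQj j).2)
      hxE (hint j hj))
    (hU.eventually_mem_of_mem_tent hA hΓ hT hκP h0 (fun j => (hQj j).1)
      (fun j => ht1 _ (hQj j).1 (hQj j).2) hxE (fun j hj => hextx j ⟨hxE, hj⟩) hfinM)

/-- Non-tangential convergence of the tent extension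
`F₀ = ∑_j α_j 1_{t_{Q_j}}` to `f = ∑_j α_j 1_{Q_j}` through the dyadic cones,
`σ`-a.e. on `∂Ω`. -/
theorem statement18 {n : ℕ} {d : ℝ} (hd0 : 0 < d) (hdn : d ≤ n)
    (Ω : Set (EuclideanSpace ℝ (Fin (n+1)))) (hΩ : IsOpen Ω)
    (E : Set (EuclideanSpace ℝ (Fin (n+1)))) (hEdef : E = frontier Ω) (hEne : E.Nonempty)
    -- corkscrew condition
    (ccs : ℝ) (hccs : 0 < ccs)
    (hcork : ∀ x ∈ E, ∀ r : ℝ, 0 < r → ENNReal.ofReal r < EMetric.diam E →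
      ∃ X, ball X (ccs * r) ⊆ ball x r ∩ Ω)
    (σ : Measure (EuclideanSpace ℝ (Fin (n+1))))
    (hσ : σ = (μH[d] : Measure (EuclideanSpace ℝ (Fin (n+1)))).restrict E)
    -- ∂Ω is d-ADR
    (CADR : ℝ≥0∞) (hCADR : 1 ≤ CADR) (hCADRfin : CADR ≠ ⊤)
    (hADR : ∀ x ∈ E, ∀ r : ℝ, 0 < r → ENNReal.ofReal r < EMetric.diam E →
      ENNReal.ofReal r ^ d / CADR ≤ σ (ball x r) ∧ σ (ball x r) ≤ CADR * ENNReal.ofReal r ^ d)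
    (D : DyadicSystem E σ)
    (ℓ : Set (EuclideanSpace ℝ (Fin (n+1))) → ℝ)
    (hℓ : ∀ Q, ℓ Q = (2:ℝ) ^ (-D.gen Q))
    -- the exterior thin-boundary property
    (hext : ∀ Q ∈ D.cubes, ∀ ϱ ∈ Ioo (0:ℝ) D.c₁,
      σ {x | x ∈ E \ Q ∧ Metric.infDist x Q ≤ ϱ * ℓ Q} ≤
        ENNReal.ofReal (D.C₁ * ϱ ^ D.γ) * σ Q)
    -- Whitney regions, dyadic cones, Carleson boxes
    (U T : Set (EuclideanSpace ℝ (Fin (n+1))) → Set (EuclideanSpace ℝ (Fin (n+1))))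
    (Γ : EuclideanSpace ℝ (Fin (n+1)) → Set (EuclideanSpace ℝ (Fin (n+1))))
    (hUΩ : ∀ Q ∈ D.cubes, U Q ⊆ Ω)
    (hΓ : ∀ y, Γ y = ⋃ Q ∈ {Q | Q ∈ D.cubes ∧ y ∈ Q}, U Q)
    (hT : ∀ Q, T Q = ⋃ Q' ∈ {Q' | Q' ∈ D.cubes ∧ Q' ⊆ Q}, U Q')
    -- on U_Q, δ(Y) ≈ ℓ(Q) and dist(Y, Q) ≲ ℓ(Q)
    (cU CU : ℝ) (hcU : 0 < cU) (hCU : 0 < CU)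
    (hδcomp : ∀ Q ∈ D.cubes, ∀ Y ∈ U Q,
      cU * ℓ Q ≤ Metric.infDist Y E ∧ Metric.infDist Y E ≤ CU * ℓ Q ∧
        Metric.infDist Y Q ≤ CU * ℓ Q)
    -- the fixed cube Q₀, the collection {Q_j} ⊆ 𝔻_{Q₀} and the coefficients α_j
    (Q₀ : Set (EuclideanSpace ℝ (Fin (n+1)))) (hQ₀ : Q₀ ∈ D.cubes)
    (Qj : ℕ → Set (EuclideanSpace ℝ (Fin (n+1))))
    (hQj : ∀ j, Qj j ∈ D.cubes ∧ Qj j ⊆ Q₀)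
    (α : ℕ → ℝ)
    -- Carleson packing condition with constant C₀
    (C₀ : ℝ≥0∞) (hC₀ : 1 ≤ C₀) (hC₀fin : C₀ ≠ ⊤)
    (hpack : ∀ Q ∈ D.cubes,
      (∑' j : {j : ℕ // Qj j ⊆ Q}, σ (Qj j.1)) ≤ C₀ * σ Q)
    -- uniformly bounded coefficients (by a multiple of the BMO norm of f)
    (A : ℝ) (hA : 0 ≤ A) (hαbd : ∀ j, |α j| ≤ A)
    -- the modified Carleson tents t_{Q}: τ_Q ⊆ t_Q ⊆ T_Q, monotone and disjoint
    (t : Set (EuclideanSpace ℝ (Fin (n+1))) → Set (EuclideanSpace ℝ (Fin (n+1))))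
    (ht1 : ∀ Q ∈ D.cubes, Q ⊆ Q₀ → t Q ⊆ T Q)
    (ht2 : ∀ Q ∈ D.cubes, Q ⊆ Q₀ → Ω \ (⋃ y ∈ E \ Q, Γ y) ⊆ t Q)
    (ht3 : ∀ Q₁ ∈ D.cubes, ∀ Q₂ ∈ D.cubes, Q₁ ⊆ Q₀ → Q₂ ⊆ Q₀ → Q₁ ⊆ Q₂ → t Q₁ ⊆ t Q₂)
    (ht4 : ∀ Q₁ ∈ D.cubes, ∀ Q₂ ∈ D.cubes, Q₁ ⊆ Q₀ → Q₂ ⊆ Q₀ → Q₁ ∩ Q₂ = ∅ →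
      t Q₁ ∩ t Q₂ = ∅)
    -- the boundary function f and its tent extension F₀
    (f : EuclideanSpace ℝ (Fin (n+1)) → ℝ)
    (hf : ∀ x, f x = ∑' j, Set.indicator (Qj j) (fun _ => α j) x)
    (F₀ : EuclideanSpace ℝ (Fin (n+1)) → ℝ)
    (hF₀ : ∀ Y, F₀ Y = ∑' j, Set.indicator (t (Qj j)) (fun _ => α j) Y) :
    ∀ᵐ x ∂σ, Filter.Tendsto F₀ (nhdsWithin x (Γ x)) (nhds (f x)) :=
  statement18_general hd0 Ω E hEdef σ hσ CADR hCADR hCADRfin hADR D ℓ hℓ hext U T Γ hUΩ hΓ hT cU CU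
    hcU hCU hδcomp Q₀ hQ₀ Qj hQj α C₀ hC₀fin hpack t ht1 ht2 f hf F₀ hF₀
end
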